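/- arXiv:1601.05310 — 4 statements merged into one kernel-verified Lean document; each statement's English description precedes it below -/
import Mathlib

section
/- Assume c ≥ c₀ > 0 and c - div b ≥ 0. Let (u,p) ∈ H^1_0(Ω) × H(div,Ω) solve p = A∇u and -div p + b·∇u + c u = f. Then ‖f‖²_{c^{-1}} = ‖u‖²_{c - div b} + ‖∇u‖²_A + ‖p‖²_{A^{-1}} + ‖b·∇u - div p‖²_{c^{-1}}; that is, the solution operator L₁ : L^2 → H^1_0 × H(div), f ↦ (u,p), is an isometry with respect to these weighted norms. -/
open MeasureTheory Complex Filter Finset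

noncomputable section

namespace RCD

variable {d : ℕ}

/-- The ambient Euclidean space `ℝ^d`. -/
abbrev E (d : ℕ) := EuclideanSpace ℝ (Fin d)

/-- Componentwise gradient of a scalar function. -/
def grad (φ : E d → ℂ) (x : E d) (j : Fin d) : ℂ :=
  fderiv ℝ φ x (EuclideanSpace.single j 1)

/-- A smooth test function compactly supported inside `Ω`. -/
def IsTest (Ω : Set (E d)) (φ : E d → ℂ) : Prop :=
  ContDiff ℝ (⊤ : ℕ∞) φ ∧ HasCompactSupport φ ∧ tsupport φ ⊆ Ω

/-- Complex `L²` inner product (conjugate-linear in the first argument). -/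
def ip (μ : Measure (E d)) (f g : E d → ℂ) : ℂ :=
  ∫ x, (starRingEnd ℂ) (f x) * g x ∂μ

/-- Complex `L²` inner product of vector fields. -/
def ipV (μ : Measure (E d)) (f g : E d → Fin d → ℂ) : ℂ :=
  ∫ x, ∑ j, (starRingEnd ℂ) (f x j) * g x j ∂μ

/-- Squared `L²` norm with real weight `γ`. -/
def nsq (μ : Measure (E d)) (γ : E d → ℝ) (f : E d → ℂ) : ℝ :=
  ∫ x, γ x * ‖f x‖ ^ 2 ∂μ

/-- Squared `L²` norm of a vector field with real weight `γ`. -/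
def nsqV (μ : Measure (E d)) (γ : E d → ℝ) (f : E d → Fin d → ℂ) : ℝ :=
  ∫ x, γ x * ∑ j, ‖f x j‖ ^ 2 ∂μ

/-- Squared `L²` norm of a vector field weighted by a matrix field `M`. -/
def nsqM (μ : Measure (E d)) (M : E d → Matrix (Fin d) (Fin d) ℝ)
    (f : E d → Fin d → ℂ) : ℝ :=
  ∫ x, ∑ i, ∑ j, M x i j * ((starRingEnd ℂ) (f x i) * f x j).re ∂μ

/-- Product of a real matrix with a complex vector. -/
def mul (M : Matrix (Fin d) (Fin d) ℝ) (v : Fin d → ℂ) (i : Fin d) : ℂ :=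
  ∑ j, (M i j : ℂ) * v j

/-- A vector field is componentwise `L²`. -/
def MemL2V (μ : Measure (E d)) (f : E d → Fin d → ℂ) : Prop :=
  ∀ j, MemLp (fun x => f x j) 2 μ

/-- Membership `v ∈ H¹₀(Ω)` with gradient `gv`: `v` is an `H¹`-limit of smooth
functions compactly supported in `Ω`. -/
def MemH10 (Ω : Set (E d)) (μ : Measure (E d)) (v : E d → ℂ)
    (gv : E d → Fin d → ℂ) : Prop :=
  MemLp v 2 μ ∧ MemL2V μ gv ∧
  ∃ φ : ℕ → E d → ℂ, (∀ n, IsTest Ω (φ n)) ∧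
    Tendsto (fun n => nsq μ (fun _ => 1) (fun x => φ n x - v x) +
      nsqV μ (fun _ => 1) (fun x j => grad (φ n) x j - gv x j)) atTop (nhds 0)

/-- Membership `p ∈ H(div,Ω)` with divergence `dp` (distributional divergence). -/
def MemHdiv (Ω : Set (E d)) (μ : Measure (E d)) (p : E d → Fin d → ℂ)
    (dp : E d → ℂ) : Prop :=
  MemL2V μ p ∧ MemLp dp 2 μ ∧
  ∀ φ : E d → ℂ, IsTest Ω φ →
    ∫ x, ∑ j, grad φ x j * p x j ∂μ = - ∫ x, φ x * dp x ∂μ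

/-- `db` is the distributional divergence of the real vector field `b` on `Ω`. -/
def IsDiv (Ω : Set (E d)) (μ : Measure (E d)) (b : E d → Fin d → ℝ)
    (db : E d → ℝ) : Prop :=
  ∀ φ : E d → ℂ, IsTest Ω φ →
    ∫ x, ∑ j, grad φ x j * (b x j : ℂ) ∂μ = - ∫ x, φ x * (db x : ℂ) ∂μ

/-- The real vector field `b` is componentwise `L^∞`. -/
def MemLinfV (μ : Measure (E d)) (b : E d → Fin d → ℝ) : Prop :=
  ∀ j, MemLp (fun x => b x j) ⊤ μ

/-- The diffusion matrix `A` is self-adjoint, `L^∞`, with lower spectral bound `α > 0`. -/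
def IsDiffusion (μ : Measure (E d)) (A : E d → Matrix (Fin d) (Fin d) ℝ)
    (α : ℝ) : Prop :=
  (∀ x, (A x).IsSymm) ∧ (∀ i j, MemLp (fun x => A x i j) ⊤ μ) ∧ 0 < α ∧
  ∀ x (v : Fin d → ℂ),
    α * ∑ j, ‖v j‖ ^ 2 ≤ ∑ i, ∑ j, A x i j * ((starRingEnd ℂ) (v i) * v j).re

/-- The convective derivative `b·∇u`. -/
def bdot (b : E d → Fin d → ℝ) (gu : E d → Fin d → ℂ) (x : E d) : ℂ :=
  ∑ j, (b x j : ℂ) * gu x j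

/-- The Friedrichs inequality on `Ω` with constant `CF`:
`‖w‖ ≤ CF ‖∇w‖` for all `w ∈ H¹₀(Ω)` (stated for squared norms). -/
def Friedrichs (Ω : Set (E d)) (μ : Measure (E d)) (CF : ℝ) : Prop :=
  ∀ w gw, MemH10 Ω μ w gw →
    nsq μ (fun _ => 1) w ≤ CF ^ 2 * nsqV μ (fun _ => 1) gw

/-- `∑_j ‖b_j‖²_{L^∞}`, the squared `L^∞` norm of the vector field `b`. -/
def bInfSq (μ : Measure (E d)) (b : E d → Fin d → ℝ) : ℝ :=
  ∑ j, ((eLpNorm (fun x => b x j) ⊤ μ).toReal) ^ 2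

end RCD

namespace RCD

section GenHelpers
variable {α : Type*} [MeasurableSpace α] {μ : Measure α}

lemma normsq_integrable {f : α → ℂ} (hf : MemLp f 2 μ) :
    Integrable (fun x => ‖f x‖ ^ 2) μ := hf.norm.integrable_sq

lemma conj_mul_integrable {f g : α → ℂ} (hf : MemLp f 2 μ) (hg : MemLp g 2 μ) :
    Integrable (fun x => (starRingEnd ℂ) (f x) * g x) μ := by
  refine Integrable.mono' ((normsq_integrable hf).add (normsq_integrable hg))
    (((RCLike.continuous_conj (K := ℂ)).comp_aestronglyMeasurable hf.1).mul hg.1) ?_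
  filter_upwards with x
  have h1 : ‖(starRingEnd ℂ) (f x) * g x‖ = ‖f x‖ * ‖g x‖ := by
    rw [norm_mul, RCLike.norm_conj]
  rw [h1]
  show ‖f x‖ * ‖g x‖ ≤ ‖f x‖ ^ 2 + ‖g x‖ ^ 2
  nlinarith [norm_nonneg (f x), norm_nonneg (g x), sq_nonneg (‖f x‖ - ‖g x‖)]

lemma integral_norm_mul_le {f g : α → ℂ} (hf : MemLp f 2 μ) (hg : MemLp g 2 μ) :
    ∫ x, ‖f x‖ * ‖g x‖ ∂μ ≤
      Real.sqrt (∫ x, ‖f x‖ ^ 2 ∂μ) * Real.sqrt (∫ x, ‖g x‖ ^ 2 ∂μ) := by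
  set F := (hf.norm).toLp _ with hF
  set G := (hg.norm).toLp _ with hG
  have hFc : (F : α →₂[μ] ℝ) =ᵐ[μ] fun x => ‖f x‖ := MemLp.coeFn_toLp _
  have hGc : (G : α →₂[μ] ℝ) =ᵐ[μ] fun x => ‖g x‖ := MemLp.coeFn_toLp _
  have hIP : (inner ℝ F G : ℝ) = ∫ x, ‖f x‖ * ‖g x‖ ∂μ := by
    rw [MeasureTheory.L2.inner_def]
    refine integral_congr_ae ?_
    filter_upwards [hFc, hGc] with x h1 h2
    simp [RCLike.inner_apply, h1, h2]
    ring
  have hnF : ‖F‖ = Real.sqrt (∫ x, ‖f x‖ ^ 2 ∂μ) := by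
    have h2 : (‖F‖ : ℝ) ^ 2 = ∫ x, ‖f x‖ ^ 2 ∂μ := by
      rw [← real_inner_self_eq_norm_sq, MeasureTheory.L2.inner_def]
      refine integral_congr_ae ?_
      filter_upwards [hFc] with x h1
      simp [RCLike.inner_apply, h1, sq]
    rw [← h2, Real.sqrt_sq (norm_nonneg _)]
  have hnG : ‖G‖ = Real.sqrt (∫ x, ‖g x‖ ^ 2 ∂μ) := by
    have h2 : (‖G‖ : ℝ) ^ 2 = ∫ x, ‖g x‖ ^ 2 ∂μ := by
      rw [← real_inner_self_eq_norm_sq, MeasureTheory.L2.inner_def]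
      refine integral_congr_ae ?_
      filter_upwards [hGc] with x h1
      simp [RCLike.inner_apply, h1, sq]
    rw [← h2, Real.sqrt_sq (norm_nonneg _)]
  calc ∫ x, ‖f x‖ * ‖g x‖ ∂μ = inner ℝ F G := hIP.symm
    _ ≤ ‖F‖ * ‖G‖ := real_inner_le_norm F G
    _ = _ := by rw [hnF, hnG]

lemma linf_bound {m : α → ℝ} (hm : MemLp m ⊤ μ) :
    ∀ᵐ x ∂μ, |m x| ≤ (eLpNorm m ⊤ μ).toReal := by
  have h := ae_le_eLpNormEssSup (f := m) (μ := μ)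
  have ht : eLpNormEssSup m μ ≠ ⊤ := by
    rw [← eLpNorm_exponent_top]; exact hm.2.ne
  filter_upwards [h] with x hx
  have : (‖m x‖₊ : ENNReal).toReal ≤ (eLpNormEssSup m μ).toReal :=
    ENNReal.toReal_mono ht hx
  simpa [eLpNorm_exponent_top, Real.norm_eq_abs] using this

lemma weighted_int {m : α → ℝ} (hmm : AEStronglyMeasurable m μ) {M : ℝ}
    (hm : ∀ᵐ x ∂μ, |m x| ≤ M)
    {f g : α → ℂ} (hf : MemLp f 2 μ) (hg : MemLp g 2 μ) :
    Integrable (fun x => m x * ((starRingEnd ℂ) (f x) * g x).re) μ := by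
  refine Integrable.bdd_mul (c := M) ((conj_mul_integrable hf hg).re) hmm ?_
  filter_upwards [hm] with x hx
  simpa [Real.norm_eq_abs] using hx

lemma weighted_est {m : α → ℝ} (hmm : AEStronglyMeasurable m μ) {M : ℝ}
    (hm : ∀ᵐ x ∂μ, |m x| ≤ M)
    {f g : α → ℂ} (hf : MemLp f 2 μ) (hg : MemLp g 2 μ) (hM : 0 ≤ M) :
    |∫ x, m x * ((starRingEnd ℂ) (f x) * g x).re ∂μ| ≤
      M * (Real.sqrt (∫ x, ‖f x‖ ^ 2 ∂μ) * Real.sqrt (∫ x, ‖g x‖ ^ 2 ∂μ)) := by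
  have hint : Integrable (fun x => ‖f x‖ * ‖g x‖) μ := by
    refine (conj_mul_integrable hf hg).norm.congr ?_
    filter_upwards with x
    rw [norm_mul, RCLike.norm_conj]
  calc |∫ x, m x * ((starRingEnd ℂ) (f x) * g x).re ∂μ|
      ≤ ∫ x, |m x * ((starRingEnd ℂ) (f x) * g x).re| ∂μ := by
        exact (Real.norm_eq_abs _) ▸ ((integral_congr_ae (Eventually.of_forall
          (fun x => (Real.norm_eq_abs _).symm))) ▸
          norm_integral_le_integral_norm (fun x => m x * ((starRingEnd ℂ) (f x) * g x).re))
    _ ≤ ∫ x, M * (‖f x‖ * ‖g x‖) ∂μ := by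
        refine integral_mono_ae ((weighted_int hmm hm hf hg).abs) (hint.const_mul M) ?_
        filter_upwards [hm] with x hx
        rw [abs_mul]
        have h1 : |((starRingEnd ℂ) (f x) * g x).re| ≤ ‖f x‖ * ‖g x‖ := by
          calc |((starRingEnd ℂ) (f x) * g x).re| ≤ ‖(starRingEnd ℂ) (f x) * g x‖ :=
            Complex.abs_re_le_norm _
          _ = ‖f x‖ * ‖g x‖ := by rw [norm_mul, RCLike.norm_conj]
        have h0 : (0:ℝ) ≤ |((starRingEnd ℂ) (f x) * g x).re| := abs_nonneg _
        nlinarith [abs_nonneg (m x), mul_nonneg (norm_nonneg (f x)) (norm_nonneg (g x))]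
    _ = M * ∫ x, ‖f x‖ * ‖g x‖ ∂μ := integral_const_mul M _
    _ ≤ M * (Real.sqrt (∫ x, ‖f x‖ ^ 2 ∂μ) * Real.sqrt (∫ x, ‖g x‖ ^ 2 ∂μ)) :=
        mul_le_mul_of_nonneg_left (integral_norm_mul_le hf hg) hM

lemma tendsto_weighted {m : α → ℝ} (hmm : AEStronglyMeasurable m μ) {M : ℝ}
    (hm : ∀ᵐ x ∂μ, |m x| ≤ M) (hM : 0 ≤ M)
    {v : ℕ → α → ℂ} {v' : α → ℂ} (hv : ∀ n, MemLp (v n) 2 μ) (hv' : MemLp v' 2 μ)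
    {w : ℕ → α → ℂ} {w' : α → ℂ} (hw : ∀ n, MemLp (w n) 2 μ) (hw' : MemLp w' 2 μ)
    (hvlim : Tendsto (fun n => ∫ x, ‖v n x - v' x‖ ^ 2 ∂μ) atTop (nhds 0))
    (hwlim : Tendsto (fun n => ∫ x, ‖w n x - w' x‖ ^ 2 ∂μ) atTop (nhds 0)) :
    Tendsto (fun n => ∫ x, m x * ((starRingEnd ℂ) (v n x) * w n x).re ∂μ) atTop
      (nhds (∫ x, m x * ((starRingEnd ℂ) (v' x) * w' x).re ∂μ)) := by
  rw [← tendsto_sub_nhds_zero_iff]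
  set V' : ℝ := Real.sqrt (∫ x, ‖v' x‖ ^ 2 ∂μ)
  set W' : ℝ := Real.sqrt (∫ x, ‖w' x‖ ^ 2 ∂μ)
  set e : ℕ → ℝ := fun n => Real.sqrt (∫ x, ‖v n x - v' x‖ ^ 2 ∂μ)
  set δ : ℕ → ℝ := fun n => Real.sqrt (∫ x, ‖w n x - w' x‖ ^ 2 ∂μ)
  have he : Tendsto e atTop (nhds 0) := by
    simpa [Real.sqrt_zero] using hvlim.sqrt
  have hδ : Tendsto δ atTop (nhds 0) := by
    simpa [Real.sqrt_zero] using hwlim.sqrt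
  have key : ∀ n, |(∫ x, m x * ((starRingEnd ℂ) (v n x) * w n x).re ∂μ) -
      ∫ x, m x * ((starRingEnd ℂ) (v' x) * w' x).re ∂μ| ≤
      M * (e n * δ n) + M * (e n * W') + M * (V' * δ n) := by
    intro n
    have hvn : MemLp (fun x => v n x - v' x) 2 μ := (hv n).sub hv'
    have hwn : MemLp (fun x => w n x - w' x) 2 μ := (hw n).sub hw'
    have hsplit : (∫ x, m x * ((starRingEnd ℂ) (v n x) * w n x).re ∂μ) -
        (∫ x, m x * ((starRingEnd ℂ) (v' x) * w' x).re ∂μ)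
        = (∫ x, m x * ((starRingEnd ℂ) (v n x - v' x) * (w n x - w' x)).re ∂μ)
          + (∫ x, m x * ((starRingEnd ℂ) (v n x - v' x) * w' x).re ∂μ)
          + (∫ x, m x * ((starRingEnd ℂ) (v' x) * (w n x - w' x)).re ∂μ) := by
      have i1 := weighted_int hmm hm hvn hwn
      have i2 := weighted_int hmm hm hvn hw'
      have i3 := weighted_int hmm hm hv' hwn
      calc (∫ x, m x * ((starRingEnd ℂ) (v n x) * w n x).re ∂μ) -
          (∫ x, m x * ((starRingEnd ℂ) (v' x) * w' x).re ∂μ)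
          = ∫ x, (m x * ((starRingEnd ℂ) (v n x) * w n x).re
              - m x * ((starRingEnd ℂ) (v' x) * w' x).re) ∂μ :=
            (integral_sub (weighted_int hmm hm (hv n) (hw n))
              (weighted_int hmm hm hv' hw')).symm
        _ = ∫ x, (m x * ((starRingEnd ℂ) (v n x - v' x) * (w n x - w' x)).re
              + m x * ((starRingEnd ℂ) (v n x - v' x) * w' x).re
              + m x * ((starRingEnd ℂ) (v' x) * (w n x - w' x)).re) ∂μ := by
            refine integral_congr_ae (Eventually.of_forall fun x => ?_)
            simp only [map_sub, sub_re, mul_re, sub_im, mul_im, map_mul, Complex.conj_re,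
              Complex.conj_im]
            ring
        _ = (∫ x, (m x * ((starRingEnd ℂ) (v n x - v' x) * (w n x - w' x)).re
              + m x * ((starRingEnd ℂ) (v n x - v' x) * w' x).re) ∂μ)
            + ∫ x, m x * ((starRingEnd ℂ) (v' x) * (w n x - w' x)).re ∂μ :=
            integral_add (i1.add i2) i3
        _ = _ := by rw [integral_add i1 i2]
    rw [hsplit]
    have h1 := weighted_est hmm hm hvn hwn hM
    have h2 := weighted_est hmm hm hvn hw' hM
    have h3 := weighted_est hmm hm hv' hwn hM
    calc |_| ≤ _ := abs_add_three _ _ _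
      _ ≤ M * (e n * δ n) + M * (e n * W') + M * (V' * δ n) := by
          gcongr
  have hbound : Tendsto (fun n => M * (e n * δ n) + M * (e n * W') + M * (V' * δ n))
      atTop (nhds 0) := by
    have : Tendsto (fun n => M * (e n * δ n) + M * (e n * W') + M * (V' * δ n)) atTop
        (nhds (M * (0 * 0) + M * (0 * W') + M * (V' * 0))) := by
      exact (((tendsto_const_nhds.mul (he.mul hδ))).add
        (tendsto_const_nhds.mul (he.mul tendsto_const_nhds))).add
        (tendsto_const_nhds.mul (tendsto_const_nhds.mul hδ))
    simpa using this
  have := squeeze_zero (fun n => abs_nonneg _) key hbound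
  exact (tendsto_zero_iff_abs_tendsto_zero _).2 this |>.congr (fun n => rfl)

end GenHelpers

section TestHelpers
variable {d : ℕ} {Ω : Set (E d)} {φ ψ : E d → ℂ}

lemma reSymm (z w : ℂ) : ((starRingEnd ℂ) z * w).re = ((starRingEnd ℂ) w * z).re := by
  simp [Complex.mul_re]; ring

lemma norm_sq_eq_conj_mul_re (z : ℂ) : ((starRingEnd ℂ) z * z).re = ‖z‖ ^ 2 := by
  simp [Complex.mul_re, Complex.sq_norm, Complex.normSq_apply]

lemma IsTest.memℒp (hφ : IsTest Ω φ) (p : ENNReal) :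
    MemLp φ p (volume.restrict Ω) :=
  (hφ.1.continuous.memLp_of_hasCompactSupport (μ := volume) hφ.2.1).restrict Ω

lemma IsTest.grad_continuous (hφ : IsTest Ω φ) (j : Fin d) :
    Continuous (fun x => grad φ x j) :=
  (hφ.1.continuous_fderiv (by simp)).clm_apply continuous_const

lemma IsTest.grad_hcs (hφ : IsTest Ω φ) (j : Fin d) :
    HasCompactSupport (fun x => grad φ x j) :=
  (hφ.2.1.fderiv ℝ).comp_left (g := fun L : E d →L[ℝ] ℂ => L (EuclideanSpace.single j 1)) rfl

lemma IsTest.grad_memℒp (hφ : IsTest Ω φ) (j : Fin d) (p : ENNReal) :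
    MemLp (fun x => grad φ x j) p (volume.restrict Ω) :=
  ((hφ.grad_continuous j).memLp_of_hasCompactSupport (μ := volume) (hφ.grad_hcs j)).restrict Ω

lemma IsTest.conj (hφ : IsTest Ω φ) : IsTest Ω (fun x => (starRingEnd ℂ) (φ x)) := by
  refine ⟨(Complex.conjCLE.contDiff).comp hφ.1, hφ.2.1.comp_left (map_zero _), ?_⟩
  refine subset_trans (closure_mono ?_) hφ.2.2
  exact Function.support_comp_subset (map_zero _) φ

lemma grad_conj (hφ : ContDiff ℝ (⊤ : ℕ∞) φ) (x : E d) (j : Fin d) :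
    grad (fun y => (starRingEnd ℂ) (φ y)) x j = (starRingEnd ℂ) (grad φ x j) := by
  have hd : DifferentiableAt ℝ φ x := (hφ.differentiable (by simp)).differentiableAt
  have : fderiv ℝ (fun y => Complex.conjCLE (φ y)) x
      = (Complex.conjCLE : ℂ →L[ℝ] ℂ).comp (fderiv ℝ φ x) :=
    (Complex.conjCLE.hasFDerivAt.comp x hd.hasFDerivAt).fderiv
  show fderiv ℝ (fun y => (starRingEnd ℂ) (φ y)) x _ = _
  have h2 : (fun y => (starRingEnd ℂ) (φ y)) = (fun y => Complex.conjCLE (φ y)) := rfl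
  rw [h2, this]
  rfl

lemma IsTest.mul (hφ : IsTest Ω φ) (hψ : IsTest Ω ψ) :
    IsTest Ω (fun x => φ x * ψ x) := by
  refine ⟨hφ.1.mul hψ.1, HasCompactSupport.mul_right hφ.2.1, ?_⟩
  refine subset_trans (closure_mono ?_) hψ.2.2
  exact Function.support_mul_subset_right φ ψ

lemma grad_mul (hφ : ContDiff ℝ (⊤ : ℕ∞) φ) (hψ : ContDiff ℝ (⊤ : ℕ∞) ψ) (x : E d) (j : Fin d) :
    grad (fun y => φ y * ψ y) x j = φ x * grad ψ x j + ψ x * grad φ x j := by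
  have hdφ : DifferentiableAt ℝ φ x := (hφ.differentiable (by simp)).differentiableAt
  have hdψ : DifferentiableAt ℝ ψ x := (hψ.differentiable (by simp)).differentiableAt
  show fderiv ℝ (fun y => φ y * ψ y) x _ = _
  rw [fderiv_fun_mul hdφ hdψ]
  simp [grad]

/-- pointwise quadratic form identity -/
lemma sum_conj_mulvec (M : Matrix (Fin d) (Fin d) ℝ) (v : Fin d → ℂ) :
    ∑ j, ((starRingEnd ℂ) (v j) * mul M v j).re
      = ∑ i, ∑ j, M i j * ((starRingEnd ℂ) (v i) * v j).re := by
  refine Finset.sum_congr rfl fun i _ => ?_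
  have h1 : (starRingEnd ℂ) (v i) * mul M v i
      = ∑ j, ((M i j : ℝ) : ℂ) * ((starRingEnd ℂ) (v i) * v j) := by
    rw [mul, Finset.mul_sum]
    exact Finset.sum_congr rfl fun j _ => by ring
  rw [h1, Complex.re_sum]
  refine Finset.sum_congr rfl fun j _ => by simp

/-- inverse matrix cancellation for uniformly positive definite `A` -/
lemma mul_inv_cancel_vec {A : Matrix (Fin d) (Fin d) ℝ} (hsymm : A.IsSymm) {α : ℝ}
    (hα : 0 < α)
    (hbound : ∀ v : Fin d → ℂ,
      α * ∑ j, ‖v j‖ ^ 2 ≤ ∑ i, ∑ j, A i j * ((starRingEnd ℂ) (v i) * v j).re)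
    (w : Fin d → ℂ) : mul A⁻¹ (mul A w) = w := by
  have hpd : A.PosDef := by
    refine Matrix.PosDef.of_dotProduct_mulVec_pos hsymm (fun v hv => ?_)
    have hb := hbound (fun j => (v j : ℂ))
    have h1 : (α : ℝ) * ∑ j, (v j) ^ 2 ≤ ∑ i, ∑ j, A i j * (v i * v j) := by
      simpa [Complex.conj_ofReal, Complex.mul_re, Complex.norm_real,
        Real.norm_eq_abs, sq_abs] using hb
    have h2 : 0 < ∑ j, (v j) ^ 2 := by
      obtain ⟨j0, hj0⟩ := Function.ne_iff.mp hv
      exact Finset.sum_pos' (fun i _ => sq_nonneg _)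
        ⟨j0, Finset.mem_univ _,
          lt_of_le_of_ne (sq_nonneg _) (Ne.symm (pow_ne_zero 2 hj0))⟩
    have h3 : 0 < ∑ i, ∑ j, A i j * (v i * v j) := lt_of_lt_of_le (by positivity) h1
    show 0 < dotProduct (star v) (A.mulVec v)
    convert h3 using 1
    simp [dotProduct, Matrix.mulVec, Finset.mul_sum]
    refine Finset.sum_congr rfl fun i _ => Finset.sum_congr rfl fun j _ => by ring
  have hdet : IsUnit A.det := (Matrix.isUnit_iff_isUnit_det A).mp hpd.isUnit
  have hone : A⁻¹ * A = 1 := Matrix.nonsing_inv_mul A hdet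
  funext i
  show ∑ j, ((A⁻¹ i j : ℝ) : ℂ) * mul A w j = w i
  simp only [mul, Finset.mul_sum]
  rw [Finset.sum_comm]
  have hterm : ∀ k, ∑ j, ((A⁻¹ i j : ℝ) : ℂ) * (((A j k : ℝ) : ℂ) * w k)
      = (((A⁻¹ * A) i k : ℝ) : ℂ) * w k := by
    intro k
    rw [Matrix.mul_apply]
    push_cast
    rw [Finset.sum_mul]
    exact Finset.sum_congr rfl fun j _ => by ring
  calc ∑ k, ∑ j, ((A⁻¹ i j : ℝ) : ℂ) * (((A j k : ℝ) : ℂ) * w k)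
      = ∑ k, (((A⁻¹ * A) i k : ℝ) : ℂ) * w k := Finset.sum_congr rfl fun k _ => hterm k
    _ = w i := by
        rw [hone]
        simp [Matrix.one_apply, apply_ite, ite_mul, one_mul, zero_mul,
          Finset.sum_ite_eq]

end TestHelpers
end RCD
open RCD
/-- Remark 2.1(i): if `c ≥ c₀ > 0` and `c - div b ≥ 0`, and `(u,p) ∈ H¹₀ × H(div)`
solves `p = A∇u`, `-div p + b·∇u + c u = f`, then
`‖f‖²_{c⁻¹} = ‖u‖²_{c - div b} + ‖∇u‖²_A + ‖p‖²_{A⁻¹} + ‖b·∇u - div p‖²_{c⁻¹}`,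
i.e. the solution operator `L₁ : f ↦ (u,p)` is an isometry. -/
theorem statement5 (d : ℕ) (Ω : Set (E d)) (μ : Measure (E d))
    (hμ : μ = volume.restrict Ω)
    (A : E d → Matrix (Fin d) (Fin d) ℝ) (α : ℝ) (hA : IsDiffusion μ A α)
    (b : E d → Fin d → ℝ) (db : E d → ℝ)
    (hb : MemLinfV μ b) (hdb : MemLp db ⊤ μ) (hdiv : IsDiv Ω μ b db)
    (c : E d → ℝ) (hcL : MemLp c ⊤ μ)
    (c₀ : ℝ) (hc₀ : 0 < c₀) (hc : ∀ᵐ x ∂μ, c₀ ≤ c x)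
    (hcb : ∀ᵐ x ∂μ, 0 ≤ c x - db x)
    (f : E d → ℂ) (hf : MemLp f 2 μ)
    (u : E d → ℂ) (gu : E d → Fin d → ℂ) (hu : MemH10 Ω μ u gu)
    (p : E d → Fin d → ℂ) (dp : E d → ℂ) (hp : MemHdiv Ω μ p dp)
    (hpA : ∀ᵐ x ∂μ, p x = mul (A x) (gu x))
    (heq : ∀ᵐ x ∂μ, -dp x + bdot b gu x + (c x : ℂ) * u x = f x) :
    nsq μ (fun x => (c x)⁻¹) f
      = nsq μ (fun x => c x - db x) u + nsqM μ A gu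
        + nsqM μ (fun x => (A x)⁻¹) p
        + nsq μ (fun x => (c x)⁻¹) (fun x => bdot b gu x - dp x) := by
  subst hμ
  set μ := volume.restrict Ω with hμ
  obtain ⟨hu2, hgu2, φ, hφt, hφconv⟩ := hu
  obtain ⟨hp2, hdp2, hpdiv⟩ := hp
  have hφ2 : ∀ n, MemLp (φ n) 2 μ := fun n => (hφt n).memℒp 2
  have hgp2 : ∀ n j, MemLp (fun x => grad (φ n) x j) 2 μ := fun n j => (hφt n).grad_memℒp j 2
  have hbdot2 : MemLp (fun x => bdot b gu x) 2 μ := by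
    have hterm : ∀ j ∈ Finset.univ, MemLp (fun x => ((b x j : ℝ) : ℂ) * gu x j) 2 μ := by
      intro j _
      have h := ((hgu2 j).smul (hb j) :
        MemLp ((fun x => b x j) • fun x => gu x j) 2 μ)
      exact h.ae_eq (Eventually.of_forall fun x => by
        simp [Pi.smul_apply', Complex.real_smul])
    have hs := memLp_finset_sum' Finset.univ hterm
    refine hs.ae_eq (Eventually.of_forall fun x => ?_)
    simp [bdot]
  have hg2 : MemLp (fun x => bdot b gu x - dp x) 2 μ := hbdot2.sub hdp2
  have hcm : AEStronglyMeasurable c μ := hcL.1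
  have hdbm : AEStronglyMeasurable db μ := hdb.1
  have hcbd := linf_bound hcL
  have hdbbd := linf_bound hdb
  have hbbd : ∀ j, ∀ᵐ x ∂μ, |b x j| ≤ (eLpNorm (fun x => b x j) ⊤ μ).toReal :=
    fun j => linf_bound (hb j)
  have hbm : ∀ j, AEStronglyMeasurable (fun x => b x j) μ := fun j => (hb j).1
  have hcinv_m : AEStronglyMeasurable (fun x => (c x)⁻¹) μ := by
    exact (aestronglyMeasurable_iff_aemeasurable).2
      ((aestronglyMeasurable_iff_aemeasurable.mp hcm).inv)
  have hcinv_bd : ∀ᵐ x ∂μ, |(c x)⁻¹| ≤ c₀⁻¹ := by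
    filter_upwards [hc] with x hx
    have h0 : (0:ℝ) < c x := lt_of_lt_of_le hc₀ hx
    rw [_root_.abs_of_nonneg (inv_nonneg.mpr h0.le)]
    exact inv_anti₀ hc₀ hx
  have hnn1 : ∀ n, (0:ℝ) ≤ nsq μ (fun _ => 1) (fun x => φ n x - u x) :=
    fun n => integral_nonneg (fun x => by positivity)
  have hnn2 : ∀ n, (0:ℝ) ≤ nsqV μ (fun _ => 1) (fun x j => grad (φ n) x j - gu x j) :=
    fun n => integral_nonneg (fun x => by positivity)
  have hculim : Tendsto (fun n => ∫ x, ‖φ n x - u x‖ ^ 2 ∂μ) atTop (nhds 0) := by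
    have h1 : Tendsto (fun n => nsq μ (fun _ => 1) (fun x => φ n x - u x)) atTop (nhds 0) :=
      squeeze_zero hnn1 (fun n => le_add_of_nonneg_right (hnn2 n)) hφconv
    refine h1.congr (fun n => ?_)
    simp [nsq]
  have hglim : ∀ j, Tendsto (fun n => ∫ x, ‖grad (φ n) x j - gu x j‖ ^ 2 ∂μ) atTop (nhds 0) := by
    intro j
    have h2 : Tendsto (fun n => nsqV μ (fun _ => 1) (fun x j => grad (φ n) x j - gu x j))
        atTop (nhds 0) :=
      squeeze_zero hnn2 (fun n => le_add_of_nonneg_left (hnn1 n)) hφconv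
    have h3 : Tendsto (fun n => ∫ x, ∑ i, ‖grad (φ n) x i - gu x i‖ ^ 2 ∂μ) atTop (nhds 0) := by
      refine h2.congr (fun n => ?_)
      simp [nsqV]
    refine squeeze_zero (fun n => integral_nonneg (fun x => by positivity)) (fun n => ?_) h3
    refine integral_mono (normsq_integrable (((hgp2 n j).sub (hgu2 j)) :
      MemLp (fun x => grad (φ n) x j - gu x j) 2 μ)) ?_ ?_
    · exact integrable_finset_sum _ (fun i _ => normsq_integrable
        ((((hgp2 n i).sub (hgu2 i))) : MemLp (fun x => grad (φ n) x i - gu x i) 2 μ))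
    · intro x
      exact Finset.single_le_sum (f := fun i => ‖grad (φ n) x i - gu x i‖ ^ 2)
        (fun i _ => by positivity) (Finset.mem_univ j)
  have hD : ∑ j, ∫ x, ((starRingEnd ℂ) (gu x j) * p x j).re ∂μ
      = - ∫ x, ((starRingEnd ℂ) (u x) * dp x).re ∂μ := by
    have hn : ∀ n, ∑ j, ∫ x, ((starRingEnd ℂ) (grad (φ n) x j) * p x j).re ∂μ
        = - ∫ x, ((starRingEnd ℂ) (φ n x) * dp x).re ∂μ := by
      intro n
      have ht : IsTest Ω (fun x => (starRingEnd ℂ) (φ n x)) := (hφt n).conj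
      have hid := hpdiv _ ht
      have hL : ∫ x, ∑ j, grad (fun y => (starRingEnd ℂ) (φ n y)) x j * p x j ∂μ
          = ∫ x, ∑ j, (starRingEnd ℂ) (grad (φ n) x j) * p x j ∂μ := by
        refine integral_congr_ae (Eventually.of_forall fun x => ?_)
        simp only [grad_conj (hφt n).1]
      rw [hL] at hid
      have hint : ∀ j ∈ Finset.univ,
          Integrable (fun x => (starRingEnd ℂ) (grad (φ n) x j) * p x j) μ :=
        fun j _ => conj_mul_integrable (hgp2 n j) (hp2 j)
      have hintr : Integrable (fun x => (starRingEnd ℂ) (φ n x) * dp x) μ :=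
        conj_mul_integrable (hφ2 n) hdp2
      have hCeq : ∑ j, ∫ x, (starRingEnd ℂ) (grad (φ n) x j) * p x j ∂μ
          = - ∫ x, (starRingEnd ℂ) (φ n x) * dp x ∂μ := by
        rw [← integral_finset_sum Finset.univ hint]
        exact hid
      calc ∑ j, ∫ x, ((starRingEnd ℂ) (grad (φ n) x j) * p x j).re ∂μ
          = ∑ j, (∫ x, (starRingEnd ℂ) (grad (φ n) x j) * p x j ∂μ).re :=
            Finset.sum_congr rfl fun j hj => integral_re (hint j hj)
        _ = (∑ j, ∫ x, (starRingEnd ℂ) (grad (φ n) x j) * p x j ∂μ).re :=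
            (Complex.re_sum _ _).symm
        _ = (- ∫ x, (starRingEnd ℂ) (φ n x) * dp x ∂μ).re := by rw [hCeq]
        _ = - (∫ x, (starRingEnd ℂ) (φ n x) * dp x ∂μ).re := by simp
        _ = - ∫ x, ((starRingEnd ℂ) (φ n x) * dp x).re ∂μ :=
            congrArg Neg.neg (integral_re hintr).symm
    have h1lim : Tendsto (fun n => ∑ j, ∫ x,
        ((starRingEnd ℂ) (grad (φ n) x j) * p x j).re ∂μ) atTop
        (nhds (∑ j, ∫ x, ((starRingEnd ℂ) (gu x j) * p x j).re ∂μ)) := by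
      refine tendsto_finset_sum _ (fun j _ => ?_)
      have h := tendsto_weighted (μ := μ) (m := fun _ => (1:ℝ))
        aestronglyMeasurable_const (M := 1)
        (Eventually.of_forall fun x => by norm_num) zero_le_one
        (v := fun n x => grad (φ n) x j) (v' := fun x => gu x j)
        (fun n => hgp2 n j) (hgu2 j)
        (w := fun n x => p x j) (w' := fun x => p x j)
        (fun n => hp2 j) (hp2 j)
        (hglim j) (by simpa using (tendsto_const_nhds (x := (0:ℝ)) (f := atTop)))
      simpa [one_mul] using h
    have h2lim : Tendsto (fun n => - ∫ x, ((starRingEnd ℂ) (φ n x) * dp x).re ∂μ) atTop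
        (nhds (- ∫ x, ((starRingEnd ℂ) (u x) * dp x).re ∂μ)) := by
      have h := tendsto_weighted (μ := μ) (m := fun _ => (1:ℝ))
        aestronglyMeasurable_const (M := 1)
        (Eventually.of_forall fun x => by norm_num) zero_le_one
        (v := φ) (v' := u) hφ2 hu2
        (w := fun n x => dp x) (w' := dp) (fun n => hdp2) hdp2
        hculim (by simpa using (tendsto_const_nhds (x := (0:ℝ)) (f := atTop)))
      have h' := h.neg
      simpa [one_mul] using h'
    exact tendsto_nhds_unique h1lim (h2lim.congr fun n => (hn n).symm)
  have hE : 2 * ∑ j, ∫ x, b x j * ((starRingEnd ℂ) (u x) * gu x j).re ∂μ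
      = - ∫ x, db x * ‖u x‖ ^ 2 ∂μ := by
    have hn : ∀ n, 2 * ∑ j, ∫ x, b x j * ((starRingEnd ℂ) (φ n x) * grad (φ n) x j).re ∂μ
        = - ∫ x, db x * ‖φ n x‖ ^ 2 ∂μ := by
      intro n
      have htc : IsTest Ω (fun x => (starRingEnd ℂ) (φ n x)) := (hφt n).conj
      have htψ : IsTest Ω (fun x => (starRingEnd ℂ) (φ n x) * φ n x) := htc.mul (hφt n)
      have hgradψ : ∀ x j, grad (fun y => (starRingEnd ℂ) (φ n y) * φ n y) x j
          = (starRingEnd ℂ) (φ n x) * grad (φ n) x j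
            + φ n x * (starRingEnd ℂ) (grad (φ n) x j) := by
        intro x j
        have h1 := grad_mul (φ := fun y => (starRingEnd ℂ) (φ n y)) (ψ := φ n)
          htc.1 (hφt n).1 x j
        exact h1.trans (by rw [grad_conj (hφt n).1])
      have hid := hdiv _ htψ
      have hbint : ∀ j ∈ Finset.univ, Integrable
          (fun x => grad (fun y => (starRingEnd ℂ) (φ n y) * φ n y) x j
            * ((b x j : ℝ) : ℂ)) μ := by
        intro j _
        have hg1 : Integrable (fun x => grad (fun y => (starRingEnd ℂ) (φ n y) * φ n y) x j) μ :=
          memLp_one_iff_integrable.mp (htψ.grad_memℒp j 1)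
        have h2 := Integrable.bdd_mul (c := (eLpNorm (fun x => b x j) ⊤ μ).toReal) hg1
          (Complex.continuous_ofReal.comp_aestronglyMeasurable (hbm j))
          (by filter_upwards [hbbd j] with x hx; simpa using hx)
        exact h2.congr (Eventually.of_forall fun x => mul_comm _ _)
      have hψint : Integrable
          (fun x => ((starRingEnd ℂ) (φ n x) * φ n x) * ((db x : ℝ) : ℂ)) μ := by
        have hg1 : Integrable (fun x => (starRingEnd ℂ) (φ n x) * φ n x) μ :=
          memLp_one_iff_integrable.mp (htψ.memℒp 1)
        have h2 := Integrable.bdd_mul (c := (eLpNorm db ⊤ μ).toReal) hg1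
          (Complex.continuous_ofReal.comp_aestronglyMeasurable hdbm)
          (by filter_upwards [hdbbd] with x hx; simpa using hx)
        exact h2.congr (Eventually.of_forall fun x => mul_comm _ _)
      have hCeq : ∑ j, ∫ x, grad (fun y => (starRingEnd ℂ) (φ n y) * φ n y) x j
            * ((b x j : ℝ) : ℂ) ∂μ
          = - ∫ x, ((starRingEnd ℂ) (φ n x) * φ n x) * ((db x : ℝ) : ℂ) ∂μ := by
        rw [← integral_finset_sum Finset.univ hbint]
        exact hid
      calc 2 * ∑ j, ∫ x, b x j * ((starRingEnd ℂ) (φ n x) * grad (φ n) x j).re ∂μ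
          = ∑ j, ∫ x, (grad (fun y => (starRingEnd ℂ) (φ n y) * φ n y) x j
              * ((b x j : ℝ) : ℂ)).re ∂μ := by
            rw [Finset.mul_sum]
            refine Finset.sum_congr rfl fun j _ => ?_
            rw [← integral_const_mul]
            refine integral_congr_ae (Eventually.of_forall fun x => ?_)
            show 2 * (b x j * ((starRingEnd ℂ) (φ n x) * grad (φ n) x j).re)
              = (grad (fun y => (starRingEnd ℂ) (φ n y) * φ n y) x j
                  * ((b x j : ℝ) : ℂ)).re
            rw [hgradψ x j]
            simp [Complex.add_re, Complex.mul_re, Complex.conj_re, Complex.conj_im,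
              Complex.ofReal_re, Complex.ofReal_im]
            ring
        _ = ∑ j, (∫ x, grad (fun y => (starRingEnd ℂ) (φ n y) * φ n y) x j
              * ((b x j : ℝ) : ℂ) ∂μ).re :=
            Finset.sum_congr rfl fun j hj => integral_re (hbint j hj)
        _ = (∑ j, ∫ x, grad (fun y => (starRingEnd ℂ) (φ n y) * φ n y) x j
              * ((b x j : ℝ) : ℂ) ∂μ).re := (Complex.re_sum _ _).symm
        _ = (- ∫ x, ((starRingEnd ℂ) (φ n x) * φ n x) * ((db x : ℝ) : ℂ) ∂μ).re := by
            rw [hCeq]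
        _ = - (∫ x, ((starRingEnd ℂ) (φ n x) * φ n x) * ((db x : ℝ) : ℂ) ∂μ).re := by simp
        _ = - ∫ x, (((starRingEnd ℂ) (φ n x) * φ n x) * ((db x : ℝ) : ℂ)).re ∂μ :=
            congrArg Neg.neg (integral_re hψint).symm
        _ = - ∫ x, db x * ‖φ n x‖ ^ 2 ∂μ := by
            refine congrArg Neg.neg (integral_congr_ae (Eventually.of_forall fun x => ?_))
            show (((starRingEnd ℂ) (φ n x) * φ n x) * ((db x : ℝ) : ℂ)).re
              = db x * ‖φ n x‖ ^ 2
            rw [← norm_sq_eq_conj_mul_re]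
            simp [Complex.mul_re, Complex.ofReal_re, Complex.ofReal_im]
            ring
    have hLHSlim : Tendsto (fun n => 2 * ∑ j, ∫ x, b x j
          * ((starRingEnd ℂ) (φ n x) * grad (φ n) x j).re ∂μ) atTop
        (nhds (2 * ∑ j, ∫ x, b x j * ((starRingEnd ℂ) (u x) * gu x j).re ∂μ)) := by
      refine Tendsto.const_mul 2 (tendsto_finset_sum _ (fun j _ => ?_))
      exact tendsto_weighted (hbm j) (hbbd j) ENNReal.toReal_nonneg
        (v := φ) (v' := u) hφ2 hu2
        (w := fun n x => grad (φ n) x j) (w' := fun x => gu x j)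
        (fun n => hgp2 n j) (hgu2 j) hculim (hglim j)
    have hRHSlim : Tendsto (fun n => - ∫ x, db x * ‖φ n x‖ ^ 2 ∂μ) atTop
        (nhds (- ∫ x, db x * ‖u x‖ ^ 2 ∂μ)) := by
      have h := tendsto_weighted hdbm hdbbd ENNReal.toReal_nonneg
        (v := φ) (v' := u) hφ2 hu2 (w := φ) (w' := u) hφ2 hu2 hculim hculim
      have h2 := h.neg
      simpa only [norm_sq_eq_conj_mul_re] using h2
    exact tendsto_nhds_unique hLHSlim (hRHSlim.congr fun n => (hn n).symm)
  have hAinv : ∀ x (w : Fin d → ℂ), mul (A x)⁻¹ (mul (A x) w) = w :=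
    fun x w => mul_inv_cancel_vec (hA.1 x) hA.2.2.1 (hA.2.2.2 x) w
  have hC1 : nsqM μ A gu = ∫ x, ∑ j, ((starRingEnd ℂ) (gu x j) * p x j).re ∂μ := by
    refine integral_congr_ae ?_
    filter_upwards [hpA] with x hx
    show ∑ i, ∑ j, A x i j * ((starRingEnd ℂ) (gu x i) * gu x j).re
      = ∑ j, ((starRingEnd ℂ) (gu x j) * p x j).re
    rw [hx]
    exact (sum_conj_mulvec (A x) (gu x)).symm
  have hC2 : nsqM μ (fun x => (A x)⁻¹) p
      = ∫ x, ∑ j, ((starRingEnd ℂ) (gu x j) * p x j).re ∂μ := by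
    refine integral_congr_ae ?_
    filter_upwards [hpA] with x hx
    show ∑ i, ∑ j, (A x)⁻¹ i j * ((starRingEnd ℂ) (p x i) * p x j).re
      = ∑ j, ((starRingEnd ℂ) (gu x j) * p x j).re
    calc ∑ i, ∑ j, (A x)⁻¹ i j * ((starRingEnd ℂ) (p x i) * p x j).re
        = ∑ j, ((starRingEnd ℂ) (p x j) * mul (A x)⁻¹ (p x) j).re :=
          (sum_conj_mulvec ((A x)⁻¹) (p x)).symm
      _ = ∑ j, ((starRingEnd ℂ) (p x j) * gu x j).re := by
          rw [hx, hAinv x (gu x)]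
      _ = ∑ j, ((starRingEnd ℂ) (gu x j) * p x j).re :=
          Finset.sum_congr rfl fun j _ => reSymm _ _
  have hsumT : ∫ x, ∑ j, ((starRingEnd ℂ) (gu x j) * p x j).re ∂μ
      = ∑ j, ∫ x, ((starRingEnd ℂ) (gu x j) * p x j).re ∂μ :=
    integral_finset_sum Finset.univ (fun j _ => (conj_mul_integrable (hgu2 j) (hp2 j)).re)
  have hfeq : ∀ᵐ x ∂μ, f x = (bdot b gu x - dp x) + (c x : ℂ) * u x := by
    filter_upwards [heq] with x hx
    rw [← hx]; ring
  have igg : Integrable (fun x => (c x)⁻¹ * ‖bdot b gu x - dp x‖ ^ 2) μ :=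
    (weighted_int hcinv_m hcinv_bd hg2 hg2).congr (Eventually.of_forall fun x => by
      simp only [norm_sq_eq_conj_mul_re])
  have igu2 : Integrable (fun x => 2 * ((starRingEnd ℂ) (u x) * (bdot b gu x - dp x)).re) μ :=
    ((conj_mul_integrable hu2 hg2).re : Integrable
      (fun x => ((starRingEnd ℂ) (u x) * (bdot b gu x - dp x)).re) μ).const_mul 2
  have icu' : Integrable (fun x => c x * ‖u x‖ ^ 2) μ :=
    (weighted_int hcm hcbd hu2 hu2).congr (Eventually.of_forall fun x => by
      simp only [norm_sq_eq_conj_mul_re])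
  have hA1 : nsq μ (fun x => (c x)⁻¹) f
      = nsq μ (fun x => (c x)⁻¹) (fun x => bdot b gu x - dp x)
        + 2 * ∫ x, ((starRingEnd ℂ) (u x) * (bdot b gu x - dp x)).re ∂μ
        + ∫ x, c x * ‖u x‖ ^ 2 ∂μ := by
    have hpt : nsq μ (fun x => (c x)⁻¹) f
        = ∫ x, ((c x)⁻¹ * ‖bdot b gu x - dp x‖ ^ 2
            + (2 * ((starRingEnd ℂ) (u x) * (bdot b gu x - dp x)).re
              + c x * ‖u x‖ ^ 2)) ∂μ := by
      refine integral_congr_ae ?_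
      filter_upwards [hc, hfeq] with x h1 h2
      have hcc : c x ≠ 0 := (lt_of_lt_of_le hc₀ h1).ne'
      show (c x)⁻¹ * ‖f x‖ ^ 2 = _
      rw [h2]
      have hns : ∀ ζ : ℂ, ‖ζ‖ ^ 2 = ζ.re ^ 2 + ζ.im ^ 2 := fun ζ => by
        rw [← norm_sq_eq_conj_mul_re]; simp [Complex.mul_re]; ring
      simp only [hns, Complex.add_re, Complex.add_im, Complex.mul_re, Complex.mul_im,
        Complex.ofReal_re, Complex.ofReal_im, Complex.sub_re, Complex.sub_im,
        Complex.conj_re, Complex.conj_im]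
      field_simp
      ring
    rw [hpt]
    have e1 : ∫ x, ((c x)⁻¹ * ‖bdot b gu x - dp x‖ ^ 2
          + (2 * ((starRingEnd ℂ) (u x) * (bdot b gu x - dp x)).re
            + c x * ‖u x‖ ^ 2)) ∂μ
        = (∫ x, (c x)⁻¹ * ‖bdot b gu x - dp x‖ ^ 2 ∂μ)
          + ∫ x, (2 * ((starRingEnd ℂ) (u x) * (bdot b gu x - dp x)).re
            + c x * ‖u x‖ ^ 2) ∂μ := integral_add igg (igu2.add icu')
    have e2 : ∫ x, (2 * ((starRingEnd ℂ) (u x) * (bdot b gu x - dp x)).re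
            + c x * ‖u x‖ ^ 2) ∂μ
        = (∫ x, 2 * ((starRingEnd ℂ) (u x) * (bdot b gu x - dp x)).re ∂μ)
          + ∫ x, c x * ‖u x‖ ^ 2 ∂μ := integral_add igu2 icu'
    have e3 : ∫ x, 2 * ((starRingEnd ℂ) (u x) * (bdot b gu x - dp x)).re ∂μ
        = 2 * ∫ x, ((starRingEnd ℂ) (u x) * (bdot b gu x - dp x)).re ∂μ :=
      integral_const_mul 2 _
    rw [e1, e2, e3]
    have hgg : nsq μ (fun x => (c x)⁻¹) (fun x => bdot b gu x - dp x)
        = ∫ x, (c x)⁻¹ * ‖bdot b gu x - dp x‖ ^ 2 ∂μ := rfl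
    rw [hgg]
    ring
  have hmid : ∫ x, ((starRingEnd ℂ) (u x) * (bdot b gu x - dp x)).re ∂μ
      = (∑ j, ∫ x, b x j * ((starRingEnd ℂ) (u x) * gu x j).re ∂μ)
        - ∫ x, ((starRingEnd ℂ) (u x) * dp x).re ∂μ := by
    have h1 : ∫ x, ((starRingEnd ℂ) (u x) * (bdot b gu x - dp x)).re ∂μ
        = ∫ x, (((starRingEnd ℂ) (u x) * bdot b gu x).re
            - ((starRingEnd ℂ) (u x) * dp x).re) ∂μ := by
      refine integral_congr_ae (Eventually.of_forall fun x => ?_)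
      simp [mul_sub]
    have i1 : Integrable (fun x => ((starRingEnd ℂ) (u x) * bdot b gu x).re) μ :=
      (conj_mul_integrable hu2 hbdot2).re
    have i2 : Integrable (fun x => ((starRingEnd ℂ) (u x) * dp x).re) μ :=
      (conj_mul_integrable hu2 hdp2).re
    rw [h1, integral_sub i1 i2]
    congr 1
    have h2 : ∫ x, ((starRingEnd ℂ) (u x) * bdot b gu x).re ∂μ
        = ∫ x, ∑ j, b x j * ((starRingEnd ℂ) (u x) * gu x j).re ∂μ := by
      refine integral_congr_ae (Eventually.of_forall fun x => ?_)
      show ((starRingEnd ℂ) (u x) * bdot b gu x).re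
        = ∑ j, b x j * ((starRingEnd ℂ) (u x) * gu x j).re
      have : (starRingEnd ℂ) (u x) * bdot b gu x
          = ∑ j, ((b x j : ℝ) : ℂ) * ((starRingEnd ℂ) (u x) * gu x j) := by
        rw [bdot, Finset.mul_sum]
        exact Finset.sum_congr rfl fun j _ => by ring
      rw [this, Complex.re_sum]
      exact Finset.sum_congr rfl fun j _ => by simp
    rw [h2]
    exact integral_finset_sum Finset.univ
      (fun j _ => weighted_int (hbm j) (hbbd j) hu2 (hgu2 j))
  have icu : Integrable (fun x => c x * ‖u x‖ ^ 2) μ :=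
    (weighted_int hcm hcbd hu2 hu2).congr (Eventually.of_forall fun x => by
      simp only [norm_sq_eq_conj_mul_re])
  have idbu : Integrable (fun x => db x * ‖u x‖ ^ 2) μ :=
    (weighted_int hdbm hdbbd hu2 hu2).congr (Eventually.of_forall fun x => by
      simp only [norm_sq_eq_conj_mul_re])
  have hB : ∫ x, c x * ‖u x‖ ^ 2 ∂μ
      = nsq μ (fun x => c x - db x) u + ∫ x, db x * ‖u x‖ ^ 2 ∂μ := by
    have : nsq μ (fun x => c x - db x) u
        = ∫ x, (c x * ‖u x‖ ^ 2 - db x * ‖u x‖ ^ 2) ∂μ := by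
      refine integral_congr_ae (Eventually.of_forall fun x => ?_)
      simp [nsq]; ring
    rw [this, integral_sub icu idbu]
    ring
  rw [hA1, hmid, hB, hC1, hC2, hsumT]
  linarith [hD, hE]
end
end

section
/- Lower error bound for the case c = div b = 0 allowed: under the hypotheses of the previous upper bound, ‖f - b·∇ũ + div p̃‖²_{Ω₀} + (1/2)‖p̃ - A∇ũ‖²_{A^{-1}} ≤ ‖u-ũ‖²_{c-div b} + ‖∇(u-ũ)‖²_A + ‖p-p̃‖²_{A^{-1}} + ‖b·∇(u-ũ)-div(p-p̃)‖²_{ĉ^{-1}}. -/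
open MeasureTheory Complex Filter Finset

noncomputable section

namespace Aux

open RCD

variable {d : ℕ}

def Qf (M : Matrix (Fin d) (Fin d) ℝ) (v : Fin d → ℂ) : ℝ :=
  ∑ i, ∑ j, M i j * ((starRingEnd ℂ) (v i) * v j).re

def cm (M : Matrix (Fin d) (Fin d) ℝ) : Matrix (Fin d) (Fin d) ℂ :=
  M.map (Complex.ofReal)

lemma Qf_eq (M : Matrix (Fin d) (Fin d) ℝ) (v : Fin d → ℂ) :
    Qf M v = (dotProduct (star v) ((cm M).mulVec v)).re := by
  simp only [Qf, cm, dotProduct, Matrix.mulVec, Pi.star_apply, Matrix.map_apply,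
    Complex.re_sum, Finset.mul_sum]
  apply Finset.sum_congr rfl; intro i _
  apply Finset.sum_congr rfl; intro j _
  rw [mul_left_comm, Complex.re_ofReal_mul, starRingEnd_apply]

lemma cm_mul (M N : Matrix (Fin d) (Fin d) ℝ) : cm (M * N) = cm M * cm N := by
  ext i j
  simp [cm, Matrix.mul_apply]

lemma cm_one : cm (1 : Matrix (Fin d) (Fin d) ℝ) = 1 := by
  simp [cm]

lemma cm_conjTranspose (M : Matrix (Fin d) (Fin d) ℝ) (hs : M.IsSymm) :
    (cm M).conjTranspose = cm M := by
  ext i j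
  simp only [cm, Matrix.conjTranspose_apply, Matrix.map_apply, star_def, Complex.conj_ofReal]
  exact_mod_cast (congrFun (congrFun hs i) j)

lemma Qf_add_sub (M : Matrix (Fin d) (Fin d) ℝ) (a b : Fin d → ℂ) :
    Qf M (fun i => a i - b i) + Qf M (fun i => a i + b i)
      = 2 * Qf M a + 2 * Qf M b := by
  simp only [Qf, ← Finset.sum_add_distrib, Finset.mul_sum]
  apply Finset.sum_congr rfl; intro i _
  apply Finset.sum_congr rfl; intro j _
  simp only [map_sub, map_add, Complex.sub_re, Complex.add_re, Complex.mul_re,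
    Complex.sub_im, Complex.add_im]
  ring

lemma Qf_abs_le (M : Matrix (Fin d) (Fin d) ℝ) (v : Fin d → ℂ) :
    |Qf M v| ≤ (∑ i, ∑ j, |M i j|) * ∑ k, ‖v k‖^2 := by
  calc |Qf M v| ≤ ∑ i, ∑ j, |M i j * ((starRingEnd ℂ) (v i) * v j).re| := by
        refine (Finset.abs_sum_le_sum_abs _ _).trans ?_
        exact Finset.sum_le_sum fun i _ => Finset.abs_sum_le_sum_abs _ _
    _ ≤ ∑ i, ∑ j, |M i j| * ∑ k, ‖v k‖^2 := by
        refine Finset.sum_le_sum fun i _ => Finset.sum_le_sum fun j _ => ?_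
        rw [abs_mul]
        refine mul_le_mul_of_nonneg_left ?_ (abs_nonneg _)
        have h1 : |((starRingEnd ℂ) (v i) * v j).re| ≤ ‖v i‖ * ‖v j‖ := by
          refine (Complex.abs_re_le_norm _).trans ?_
          refine (norm_mul _ _).trans_le ?_
          simp
        refine h1.trans ?_
        have h2 : ‖v i‖ * ‖v j‖ ≤ (‖v i‖^2 + ‖v j‖^2)/2 := by
          nlinarith [sq_nonneg (‖v i‖ - ‖v j‖)]
        refine h2.trans ?_
        have hi : ‖v i‖^2 ≤ ∑ k, ‖v k‖^2 :=
          Finset.single_le_sum (fun k _ => sq_nonneg ‖v k‖) (Finset.mem_univ i)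
        have hj : ‖v j‖^2 ≤ ∑ k, ‖v k‖^2 :=
          Finset.single_le_sum (fun k _ => sq_nonneg ‖v k‖) (Finset.mem_univ j)
        linarith
    _ = (∑ i, ∑ j, |M i j|) * ∑ k, ‖v k‖^2 := by
        rw [Finset.sum_mul]
        exact Finset.sum_congr rfl fun i _ => (Finset.sum_mul _ _ _).symm

section key
variable (M : Matrix (Fin d) (Fin d) ℝ) (hs : M.IsSymm) {α : ℝ} (hα : 0 < α)
  (hpd : ∀ v : Fin d → ℂ, α * ∑ j, ‖v j‖^2 ≤ Qf M v)

include hα hpd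

omit hs in
lemma det_ne : M.det ≠ 0 := by
  intro h
  obtain ⟨v, hv, hMv⟩ := (Matrix.exists_mulVec_eq_zero_iff).2 h
  set w : Fin d → ℂ := fun i => (v i : ℂ) with hw
  have hcmv : (cm M).mulVec w = 0 := by
    funext i
    have h0 := congrFun hMv i
    simp only [Matrix.mulVec, dotProduct, Pi.zero_apply] at h0 ⊢
    simp only [cm, Matrix.map_apply, hw]
    exact_mod_cast congrArg (Complex.ofReal) h0
  have h1 := hpd w
  rw [Qf_eq, hcmv] at h1
  simp only [dotProduct_zero, Complex.zero_re] at h1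
  have hvz : v = 0 := by
    funext i
    show v i = 0
    have hnn : (0:ℝ) ≤ ∑ j, ‖w j‖^2 := Finset.sum_nonneg fun j _ => sq_nonneg _
    have : ∑ j, ‖w j‖^2 = 0 := le_antisymm (by nlinarith) hnn
    have := (Finset.sum_eq_zero_iff_of_nonneg
      (fun j _ => sq_nonneg ‖w j‖)).1 this i (Finset.mem_univ i)
    have : ‖w i‖ = 0 := by nlinarith [norm_nonneg (w i)]
    have hwz : w i = 0 := norm_eq_zero.1 this
    simp only [hw] at hwz
    exact_mod_cast hwz
  exact hv hvz

omit hs in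
lemma inv_facts :
    cm (M⁻¹) * cm M = 1 ∧ cm M * cm (M⁻¹) = 1 := by
  have h := det_ne M hα hpd
  have hu : IsUnit M.det := isUnit_iff_ne_zero.2 h
  constructor
  · rw [← cm_mul, Matrix.nonsing_inv_mul M hu, cm_one]
  · rw [← cm_mul, Matrix.mul_nonsing_inv M hu, cm_one]

include hs in
lemma Qf_inv_mulVec (e : Fin d → ℂ) :
    Qf M⁻¹ ((cm M).mulVec e) = Qf M e := by
  obtain ⟨h1, h2⟩ := inv_facts M hα hpd
  rw [Qf_eq, Qf_eq]
  have hmv : (cm M⁻¹).mulVec ((cm M).mulVec e) = e := by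
    rw [Matrix.mulVec_mulVec, h1, Matrix.one_mulVec]
  rw [hmv]
  rw [Matrix.star_mulVec, ← Matrix.dotProduct_mulVec, cm_conjTranspose M hs]

include hs in
lemma Qf_inv_nonneg (v : Fin d → ℂ) : 0 ≤ Qf M⁻¹ v := by
  obtain ⟨h1, h2⟩ := inv_facts M hα hpd
  set w := (cm M⁻¹).mulVec v with hw
  have hv : v = (cm M).mulVec w := by
    rw [hw, Matrix.mulVec_mulVec, h2, Matrix.one_mulVec]
  calc (0:ℝ) ≤ α * ∑ j, ‖w j‖^2 := by positivity
    _ ≤ Qf M w := hpd w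
    _ = Qf M⁻¹ ((cm M).mulVec w) := (Qf_inv_mulVec M hs hα hpd w).symm
    _ = Qf M⁻¹ v := by rw [← hv]

include hs in
lemma Qf_inv_le (v : Fin d → ℂ) : Qf M⁻¹ v ≤ α⁻¹ * ∑ j, ‖v j‖^2 := by
  obtain ⟨h1, h2⟩ := inv_facts M hα hpd
  set w := (cm M⁻¹).mulVec v with hw
  have hv : v = (cm M).mulVec w := by
    rw [hw, Matrix.mulVec_mulVec, h2, Matrix.one_mulVec]
  have hQw : Qf M⁻¹ v = Qf M w := by
    conv_lhs => rw [hv]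
    exact Qf_inv_mulVec M hs hα hpd w
  have hdot : Qf M⁻¹ v = (dotProduct (star v) w).re := by
    rw [Qf_eq, hw]
  have habs : (dotProduct (star v) w).re ≤ ∑ i, ‖v i‖ * ‖w i‖ := by
    refine (Complex.re_le_norm _).trans ?_
    have hde : dotProduct (star v) w = ∑ i, star (v i) * w i := by
      simp [dotProduct]
    rw [hde]
    refine (norm_sum_le _ _).trans ?_
    refine Finset.sum_le_sum fun i _ => ?_
    rw [norm_mul, norm_star]
  set r := ∑ i, ‖v i‖ * ‖w i‖ with hr
  have hcs : r^2 ≤ (∑ i, ‖v i‖^2) * ∑ i, ‖w i‖^2 :=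
    Finset.sum_mul_sq_le_sq_mul_sq _ _ _
  set V := ∑ i, ‖v i‖^2 with hV
  set W := ∑ i, ‖w i‖^2 with hW
  have hVn : 0 ≤ V := Finset.sum_nonneg fun k _ => sq_nonneg _
  have hWn : 0 ≤ W := Finset.sum_nonneg fun k _ => sq_nonneg _
  have hQge : α * W ≤ Qf M w := hpd w
  have hQnn : 0 ≤ Qf M⁻¹ v := Qf_inv_nonneg M hs hα hpd v
  have hQle : Qf M⁻¹ v ≤ r := hdot.trans_le habs
  set s := Qf M⁻¹ v with hsdef
  rcases eq_or_lt_of_le hQnn with h0 | h0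
  · rw [← h0]; positivity
  · have h1 : s^2 ≤ V * W := by nlinarith
    have h2 : α * W ≤ s := by rw [hQw]; exact hQge
    have h3 : α * s^2 ≤ V * s := by nlinarith
    have h4 : α * s ≤ V := by nlinarith
    rw [inv_mul_eq_div, le_div_iff₀ hα]
    linarith

include hs in
lemma Qf_key (g g' p' : Fin d → ℂ) :
    (1/2) * Qf M⁻¹ (fun i => p' i - RCD.mul M g' i)
      ≤ Qf M (fun i => g i - g' i) + Qf M⁻¹ (fun i => RCD.mul M g i - p' i) := by
  set e : Fin d → ℂ := fun i => g i - g' i with he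
  set r : Fin d → ℂ := fun i => RCD.mul M g i - p' i with hrr
  have hMe : (fun i => RCD.mul M g i - RCD.mul M g' i) = (cm M).mulVec e := by
    funext i
    simp only [RCD.mul, he, ← Finset.sum_sub_distrib, ← mul_sub]
    simp [cm, Matrix.mulVec, dotProduct]
  have hsplit : (fun i => p' i - RCD.mul M g' i)
      = fun i => (cm M).mulVec e i - r i := by
    funext i
    have h5 := congrFun hMe i
    simp only [hrr]
    rw [← h5]
    ring
  rw [hsplit]
  have hpar := Qf_add_sub (M⁻¹) ((cm M).mulVec e) r
  have hQMe : Qf M⁻¹ ((cm M).mulVec e) = Qf M e := Qf_inv_mulVec M hs hα hpd e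
  have hnn : 0 ≤ Qf M⁻¹ (fun i => (cm M).mulVec e i + r i) :=
    Qf_inv_nonneg M hs hα hpd _
  have hpar' : Qf M⁻¹ (fun i => (cm M).mulVec e i - r i)
      + Qf M⁻¹ (fun i => (cm M).mulVec e i + r i) = 2 * Qf M e + 2 * Qf M⁻¹ r := by
    rw [← hQMe]; exact hpar
  linarith

end key
end Aux


namespace Aux2

open RCD MeasureTheory
open scoped ENNReal NNReal

lemma ae_le_of_top {X : Type*} [MeasurableSpace X] {ν : Measure X} {F : Type*}
    [NormedAddCommGroup F] {f : X → F} (hf : MemLp f ⊤ ν) :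
    ∀ᵐ x ∂ν, ‖f x‖ ≤ (eLpNorm f ⊤ ν).toReal := by
  filter_upwards [ae_le_eLpNormEssSup (f := f) (μ := ν)] with x hx
  have he : eLpNorm f ⊤ ν = eLpNormEssSup f ν := eLpNorm_exponent_top
  rw [he]
  have hlt : eLpNormEssSup f ν < ⊤ := by
    rw [← eLpNorm_exponent_top]; exact hf.2
  calc ‖f x‖ = ((‖f x‖₊ : ℝ≥0∞)).toReal := by simp
    _ ≤ _ := ENNReal.toReal_mono hlt.ne hx

end Aux2

open RCD Aux Aux2
/-- Theorem 4.1, lower bound: under the hypotheses of the upper bound,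
`‖f - b·∇ũ + div p̃‖²_{Ω₀} + (1/2)‖p̃ - A∇ũ‖²_{A⁻¹} ≤
 ‖u-ũ‖²_{c-div b} + ‖∇(u-ũ)‖²_A + ‖p-p̃‖²_{A⁻¹} + ‖b·∇(u-ũ)-div(p-p̃)‖²_{ĉ⁻¹}`. -/
theorem statement12 (d : ℕ) (Ω Ω₀ : Set (E d)) (μ : Measure (E d))
    (hμ : μ = volume.restrict Ω) (hΩ : Bornology.IsBounded Ω)
    (hΩ₀m : MeasurableSet Ω₀) (hΩ₀ : Ω₀ ⊆ Ω)
    (A : E d → Matrix (Fin d) (Fin d) ℝ) (α : ℝ) (hA : IsDiffusion μ A α)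
    (b : E d → Fin d → ℝ) (db : E d → ℝ)
    (hb : MemLinfV μ b) (hdb : MemLp db ⊤ μ) (hdiv : IsDiv Ω μ b db)
    (c : E d → ℝ) (hcL : MemLp c ⊤ μ) (hcpos : ∀ᵐ x ∂μ, 0 ≤ c x)
    (c₀ : ℝ) (hc₀ : 0 < c₀)
    (hc0 : ∀ᵐ x ∂(volume.restrict Ω₀), c x = 0)
    (hcc : ∀ᵐ x ∂(volume.restrict (Ω \ Ω₀)), c₀ ≤ c x)
    (hcb : ∀ᵐ x ∂μ, 0 ≤ c x - db x)
    (CF : ℝ) (hCF : 0 < CF) (hF : Friedrichs Ω μ CF)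
    (f : E d → ℂ) (hf : MemLp f 2 μ)
    (u : E d → ℂ) (gu : E d → Fin d → ℂ) (hu : MemH10 Ω μ u gu)
    (p : E d → Fin d → ℂ) (dp : E d → ℂ) (hp : MemHdiv Ω μ p dp)
    (hpA : ∀ᵐ x ∂μ, p x = mul (A x) (gu x))
    (heq : ∀ᵐ x ∂μ, -dp x + bdot b gu x + (c x : ℂ) * u x = f x)
    (u' : E d → ℂ) (gu' : E d → Fin d → ℂ) (hu' : MemH10 Ω μ u' gu')
    (p' : E d → Fin d → ℂ) (dp' : E d → ℂ) (hp' : MemHdiv Ω μ p' dp') :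
    nsq (volume.restrict Ω₀) (fun _ => 1) (fun x => f x - bdot b gu' x + dp' x)
      + (1 / 2) * nsqM μ (fun x => (A x)⁻¹) (fun x j => p' x j - mul (A x) (gu' x) j)
    ≤ nsq μ (fun x => c x - db x) (fun x => u x - u' x)
      + nsqM μ A (fun x j => gu x j - gu' x j)
      + nsqM μ (fun x => (A x)⁻¹) (fun x j => p x j - p' x j)
      + nsq μ (fun x => (c x + Set.indicator Ω₀ (fun _ => (1 : ℝ)) x)⁻¹)
          (fun x => bdot b (fun y k => gu y k - gu' y k) x - (dp x - dp' x)) := by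
  obtain ⟨hsymm, hAL, hα, hbound⟩ := hA
  have hpdx : ∀ x (v : Fin d → ℂ), α * ∑ j, ‖v j‖^2 ≤ Qf (A x) v := fun x v => hbound x v
  have hsx : ∀ x, (A x).IsSymm := hsymm
  -- the residual vector field
  set G : E d → ℂ := fun x => bdot b (fun y k => gu y k - gu' y k) x - (dp x - dp' x) with hGdef
  set h : E d → ℂ := fun x => f x - bdot b gu' x + dp' x with hhdef
  -- basic measure identities
  have hres : μ.restrict Ω₀ = volume.restrict Ω₀ := by
    rw [hμ, Measure.restrict_restrict hΩ₀m, Set.inter_eq_self_of_subset_left hΩ₀]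
  -- G is L²
  have hterm : ∀ j, MemLp (fun x => (b x j : ℂ) * (gu x j - gu' x j)) 2 μ := by
    intro j
    have h1 : MemLp (fun x => gu x j - gu' x j) 2 μ := (hu.2.1 j).sub (hu'.2.1 j)
    have h3 := h1.smul (r := 2) (hb j)
    simpa only [Pi.smul_def', Complex.real_smul] using h3
  have hsumG : MemLp (fun x => ∑ j, (b x j : ℂ) * (gu x j - gu' x j)) 2 μ :=
    memLp_finset_sum _ (fun j _ => hterm j)
  have hG2 : MemLp G 2 μ := by
    have := hsumG.sub ((hp.2.1).sub (hp'.2.1))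
    simpa only [hGdef, bdot, Pi.sub_def] using this
  have hGsq : Integrable (fun x => ‖G x‖^2) μ := hG2.norm.integrable_sq
  -- part 1 : R₁ ≥ 0
  have hR1 : 0 ≤ nsq μ (fun x => c x - db x) (fun x => u x - u' x) := by
    rw [nsq]
    refine integral_nonneg_of_ae ?_
    filter_upwards [hcb] with x hx
    exact mul_nonneg hx (sq_nonneg _)
  -- a.e. facts on Ω₀ and its complement
  have hc0' : ∀ᵐ x ∂μ, x ∈ Ω₀ → c x = 0 := by
    rw [← ae_restrict_iff' hΩ₀m, hres]; exact hc0
  have hcc' : ∀ᵐ x ∂μ, x ∉ Ω₀ → c₀ ≤ c x := by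
    have hset : Ω₀ᶜ ∩ Ω = Ω \ Ω₀ := by
      ext y; simp [Set.mem_diff, and_comm]
    have : μ.restrict Ω₀ᶜ = volume.restrict (Ω \ Ω₀) := by
      rw [hμ, Measure.restrict_restrict hΩ₀m.compl, hset]
    have h2 : ∀ᵐ x ∂(μ.restrict Ω₀ᶜ), c₀ ≤ c x := by rw [this]; exact hcc
    exact (ae_restrict_iff' hΩ₀m.compl).1 h2
  have hhG : ∀ᵐ x ∂μ, x ∈ Ω₀ → h x = G x := by
    refine (ae_restrict_iff' hΩ₀m).1 ?_
    rw [hres]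
    have heq' : ∀ᵐ x ∂(volume.restrict Ω₀), -dp x + bdot b gu x + (c x : ℂ) * u x = f x := by
      rw [← hres]; exact ae_restrict_of_ae heq
    filter_upwards [heq', hc0] with x hx hcx
    have hb' : bdot b (fun y k => gu y k - gu' y k) x = bdot b gu x - bdot b gu' x := by
      simp [bdot, mul_sub, Finset.sum_sub_distrib]
    simp only [hhdef, hGdef, hb']
    rw [← hx, hcx]
    push_cast
    ring
  -- part 2 : first LHS term ≤ last RHS term
  have hL1 : nsq (volume.restrict Ω₀) (fun _ => (1:ℝ)) h
      = ∫ x, Set.indicator Ω₀ (fun y => ‖h y‖^2) x ∂μ := by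
    rw [nsq, integral_indicator hΩ₀m]
    simp only [one_mul]
    rw [hres]
  have hwm : AEStronglyMeasurable
      (fun x => (c x + Set.indicator Ω₀ (fun _ => (1:ℝ)) x)⁻¹ * ‖G x‖^2) μ := by
    have h1 : AEMeasurable c μ := hcL.1.aemeasurable
    have h2 : AEMeasurable (fun x => Set.indicator Ω₀ (fun _ => (1:ℝ)) x) μ :=
      (measurable_const.indicator hΩ₀m).aemeasurable
    have h3 : AEMeasurable (fun x => ‖G x‖^2) μ :=
      (hG2.1.norm.aemeasurable).pow_const 2
    exact (((h1.add h2).inv.mul h3)).aestronglyMeasurable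
  have hwle : ∀ᵐ x ∂μ, ‖(c x + Set.indicator Ω₀ (fun _ => (1:ℝ)) x)⁻¹ * ‖G x‖^2‖
      ≤ ‖max 1 c₀⁻¹ * ‖G x‖^2‖ := by
    filter_upwards [hcpos, hc0', hcc'] with x h1 h2 h3
    have hGnn : (0:ℝ) ≤ ‖G x‖^2 := sq_nonneg _
    have hwnn : 0 ≤ (c x + Set.indicator Ω₀ (fun _ => (1:ℝ)) x)⁻¹ := by
      refine inv_nonneg.2 (add_nonneg h1 (Set.indicator_nonneg (fun _ _ => zero_le_one) x))
    have hwb : (c x + Set.indicator Ω₀ (fun _ => (1:ℝ)) x)⁻¹ ≤ max 1 c₀⁻¹ := by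
      by_cases hx : x ∈ Ω₀
      · rw [Set.indicator_of_mem hx, h2 hx]
        simp
      · rw [Set.indicator_of_notMem hx, add_zero]
        have hc := h3 hx
        refine le_trans ?_ (le_max_right _ _)
        exact inv_anti₀ hc₀ hc
    have e1 : ‖(c x + Set.indicator Ω₀ (fun _ => (1:ℝ)) x)⁻¹ * ‖G x‖^2‖
        = (c x + Set.indicator Ω₀ (fun _ => (1:ℝ)) x)⁻¹ * ‖G x‖^2 :=
      Real.norm_of_nonneg (mul_nonneg hwnn hGnn)
    have e2 : ‖max 1 c₀⁻¹ * ‖G x‖^2‖ = max 1 c₀⁻¹ * ‖G x‖^2 :=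
      Real.norm_of_nonneg (mul_nonneg (le_trans hwnn hwb) hGnn)
    rw [e1, e2]
    exact mul_le_mul_of_nonneg_right hwb hGnn
  have hwInt : Integrable
      (fun x => (c x + Set.indicator Ω₀ (fun _ => (1:ℝ)) x)⁻¹ * ‖G x‖^2) μ :=
    Integrable.mono (hGsq.const_mul (max 1 c₀⁻¹)) hwm hwle
  have hpart2 : nsq (volume.restrict Ω₀) (fun _ => (1:ℝ)) h
      ≤ nsq μ (fun x => (c x + Set.indicator Ω₀ (fun _ => (1:ℝ)) x)⁻¹) G := by
    rw [hL1, nsq]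
    refine integral_mono_of_nonneg ?_ hwInt ?_
    · filter_upwards with x
      exact Set.indicator_nonneg (fun y _ => sq_nonneg _) x
    · filter_upwards [hcpos, hc0', hhG] with x h1 h2 h3
      by_cases hx : x ∈ Ω₀
      · rw [Set.indicator_of_mem hx, Set.indicator_of_mem hx, h2 hx, h3 hx]
        simp
      · rw [Set.indicator_of_notMem hx]
        have hwnn : 0 ≤ (c x + Set.indicator Ω₀ (fun _ => (1:ℝ)) x)⁻¹ :=
          inv_nonneg.2 (add_nonneg h1 (Set.indicator_nonneg (fun _ _ => zero_le_one) x))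
        exact mul_nonneg hwnn (sq_nonneg _)
  -- part 3 : quadratic form estimates
  have hdet : AEMeasurable (fun x => (A x).det) μ := by
    simp_rw [Matrix.det_apply']
    refine Finset.aemeasurable_fun_sum _ fun σ _ => ?_
    refine AEMeasurable.const_mul ?_ _
    exact Finset.aemeasurable_fun_prod _ fun i _ => (hAL _ _).1.aemeasurable
  have hadj : ∀ i j, AEMeasurable (fun x => (A x).adjugate i j) μ := by
    intro i j
    simp_rw [Matrix.adjugate_apply, Matrix.det_apply']
    refine Finset.aemeasurable_fun_sum _ fun σ _ => AEMeasurable.const_mul ?_ _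
    refine Finset.aemeasurable_fun_prod _ fun l _ => ?_
    by_cases hl : σ l = j
    · simp only [Matrix.updateRow_apply, hl, if_true]
      exact aemeasurable_const
    · simp only [Matrix.updateRow_apply, hl, if_false]
      exact (hAL _ _).1.aemeasurable
  have hinv : ∀ i j, AEMeasurable (fun x => ((A x)⁻¹) i j) μ := by
    intro i j
    have hfun : (fun x => ((A x)⁻¹) i j) = fun x => ((A x).det)⁻¹ * (A x).adjugate i j := by
      funext x
      rw [Matrix.inv_def, Matrix.smul_apply, smul_eq_mul, Ring.inverse_eq_inv]
    rw [hfun]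
    exact (hdet.inv).mul (hadj i j)
  have hQmeas : ∀ (W : E d → Matrix (Fin d) (Fin d) ℝ) (v : E d → Fin d → ℂ),
      (∀ i j, AEMeasurable (fun x => W x i j) μ) →
      (∀ j, AEMeasurable (fun x => v x j) μ) →
      AEStronglyMeasurable (fun x => Qf (W x) (v x)) μ := by
    intro W v hW hv
    refine AEMeasurable.aestronglyMeasurable ?_
    unfold Aux.Qf
    refine Finset.aemeasurable_fun_sum _ fun i _ => Finset.aemeasurable_fun_sum _ fun j _ => ?_
    refine (hW i j).mul ?_
    have h1 : AEMeasurable (fun x => (starRingEnd ℂ) (v x i) * v x j) μ := by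
      simp_rw [starRingEnd_apply]
      exact (continuous_star.measurable.comp_aemeasurable (hv i)).mul (hv j)
    exact Complex.measurable_re.comp_aemeasurable h1
  have hgg : ∀ j, MemLp (fun x => gu x j - gu' x j) 2 μ := fun j => (hu.2.1 j).sub (hu'.2.1 j)
  have hpp : ∀ j, MemLp (fun x => p x j - p' x j) 2 μ := fun j => (hp.1 j).sub (hp'.1 j)
  have hSgg : Integrable (fun x => ∑ k, ‖gu x k - gu' x k‖^2) μ :=
    integrable_finset_sum _ fun k _ => ((hgg k).norm.integrable_sq)
  have hSpp : Integrable (fun x => ∑ k, ‖p x k - p' x k‖^2) μ :=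
    integrable_finset_sum _ fun k _ => ((hpp k).norm.integrable_sq)
  have hAbd : ∀ᵐ x ∂μ, ∀ i j, |A x i j| ≤ (eLpNorm (fun y => A y i j) ⊤ μ).toReal := by
    rw [ae_all_iff]
    intro i
    rw [ae_all_iff]
    intro j
    simpa [Real.norm_eq_abs] using Aux2.ae_le_of_top (hAL i j)
  set K := ∑ i, ∑ j, (eLpNorm (fun y => A y i j) ⊤ μ).toReal with hK
  have hKnn : 0 ≤ K := Finset.sum_nonneg fun i _ =>
    Finset.sum_nonneg fun j _ => ENNReal.toReal_nonneg
  have hI2 : Integrable (fun x => Qf (A x) (fun j => gu x j - gu' x j)) μ := by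
    refine Integrable.mono (hSgg.const_mul K)
      (hQmeas A (fun x j => gu x j - gu' x j)
        (fun i j => (hAL i j).1.aemeasurable)
        (fun j => ((hu.2.1 j).1.aemeasurable).sub ((hu'.2.1 j).1.aemeasurable))) ?_
    filter_upwards [hAbd] with x hx
    have hb1 := Qf_abs_le (A x) (fun j => gu x j - gu' x j)
    have hS : 0 ≤ ∑ k, ‖gu x k - gu' x k‖^2 := Finset.sum_nonneg fun k _ => sq_nonneg _
    have hb2 : (∑ i, ∑ j, |A x i j|) ≤ K := by
      rw [hK]
      exact Finset.sum_le_sum fun i _ => Finset.sum_le_sum fun j _ => hx i j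
    rw [Real.norm_eq_abs, Real.norm_eq_abs,
      _root_.abs_of_nonneg (mul_nonneg hKnn hS)]
    calc |Qf (A x) (fun j => gu x j - gu' x j)|
        ≤ (∑ i, ∑ j, |A x i j|) * ∑ k, ‖gu x k - gu' x k‖^2 := hb1
      _ ≤ K * ∑ k, ‖gu x k - gu' x k‖^2 := mul_le_mul_of_nonneg_right hb2 hS
  have hI3 : Integrable (fun x => Qf ((A x)⁻¹) (fun j => p x j - p' x j)) μ := by
    refine Integrable.mono (hSpp.const_mul α⁻¹)
      (hQmeas (fun x => (A x)⁻¹) (fun x j => p x j - p' x j) hinv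
        (fun j => ((hp.1 j).1.aemeasurable).sub ((hp'.1 j).1.aemeasurable))) ?_
    refine Filter.Eventually.of_forall fun x => ?_
    have h0 := Qf_inv_nonneg (A x) (hsx x) hα (hpdx x) (fun j => p x j - p' x j)
    have h1 := Qf_inv_le (A x) (hsx x) hα (hpdx x) (fun j => p x j - p' x j)
    have hS : 0 ≤ ∑ k, ‖p x k - p' x k‖^2 := Finset.sum_nonneg fun k _ => sq_nonneg _
    rw [Real.norm_eq_abs, Real.norm_eq_abs, _root_.abs_of_nonneg h0,
      _root_.abs_of_nonneg (mul_nonneg (inv_nonneg.2 hα.le) hS)]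
    exact h1
  have hrfl1 : nsqM μ (fun x => (A x)⁻¹) (fun x j => p' x j - mul (A x) (gu' x) j)
      = ∫ x, Qf ((A x)⁻¹) (fun j => p' x j - mul (A x) (gu' x) j) ∂μ := rfl
  have hrfl2 : nsqM μ A (fun x j => gu x j - gu' x j)
      = ∫ x, Qf (A x) (fun j => gu x j - gu' x j) ∂μ := rfl
  have hrfl3 : nsqM μ (fun x => (A x)⁻¹) (fun x j => p x j - p' x j)
      = ∫ x, Qf ((A x)⁻¹) (fun j => p x j - p' x j) ∂μ := rfl
  have hpart3 : (1/2 : ℝ) * nsqM μ (fun x => (A x)⁻¹) (fun x j => p' x j - mul (A x) (gu' x) j)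
      ≤ nsqM μ A (fun x j => gu x j - gu' x j)
        + nsqM μ (fun x => (A x)⁻¹) (fun x j => p x j - p' x j) := by
    rw [hrfl1, hrfl2, hrfl3, ← integral_const_mul]
    have hle : ∫ x, (1/2 : ℝ) * Qf ((A x)⁻¹) (fun j => p' x j - mul (A x) (gu' x) j) ∂μ
        ≤ ∫ x, (Qf (A x) (fun j => gu x j - gu' x j)
            + Qf ((A x)⁻¹) (fun j => p x j - p' x j)) ∂μ := by
      refine integral_mono_of_nonneg ?_ (hI2.add hI3) ?_
      · refine Filter.Eventually.of_forall fun x => ?_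
        exact mul_nonneg (by norm_num)
          (Qf_inv_nonneg (A x) (hsx x) hα (hpdx x) _)
      · filter_upwards [hpA] with x hx
        have hkey := Qf_key (A x) (hsx x) hα (hpdx x) (gu x) (gu' x) (p' x)
        have hre : (fun j => p x j - p' x j)
            = (fun i => RCD.mul (A x) (gu x) i - p' x i) := by
          funext j
          rw [hx]
        rw [hre]
        exact hkey
    rw [integral_add hI2 hI3] at hle
    exact hle
  linarith [hR1, hpart2, hpart3]
end
end

section
/- Improved lower bound: if in addition -div b ≥ 0 on Ω_c (and the other hypotheses of Theorem 3 hold), then (1/2)(‖f - c ũ - b·∇ũ + div p̃‖²_{Ω_c, c^{-1}} + ‖p̃ - A∇ũ‖²_{A^{-1}}) + ‖f - b·∇ũ + div p̃‖²_{Ω₀} ≤ ‖u-ũ‖²_{c-div b} + ‖∇(u-ũ)‖²_A + ‖p-p̃‖²_{A^{-1}} + ‖b·∇(u-ũ)-div(p-p̃)‖²_{ĉ^{-1}}. -/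
open MeasureTheory Complex Filter Finset

noncomputable section

open RCD

open scoped ENNReal NNReal


namespace RCDAux
open Matrix
variable {d : ℕ}

def q (M : Matrix (Fin d) (Fin d) ℝ) (v : Fin d → ℂ) : ℝ :=
  ∑ i, ∑ j, M i j * ((starRingEnd ℂ) (v i) * v j).re

def mulC (M : Matrix (Fin d) (Fin d) ℝ) (v : Fin d → ℂ) (i : Fin d) : ℂ :=
  ∑ j, (M i j : ℂ) * v j

lemma mulC_eq_mul (M : Matrix (Fin d) (Fin d) ℝ) (v : Fin d → ℂ) : mulC M v = RCD.mul M v := rfl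

lemma mulC_eq_mulVec (M : Matrix (Fin d) (Fin d) ℝ) (v : Fin d → ℂ) :
    mulC M v = (M.map (⇑Complex.ofRealHom)) *ᵥ v := by
  funext i
  simp [mulC, Matrix.mulVec, dotProduct, Matrix.map_apply]

lemma q_eq (M : Matrix (Fin d) (Fin d) ℝ) (v : Fin d → ℂ) :
    q M v = (dotProduct (star v) ((M.map (⇑Complex.ofRealHom)) *ᵥ v)).re := by
  simp only [q, dotProduct, Matrix.mulVec, Matrix.map_apply, Complex.re_sum,
    Finset.mul_sum, Complex.ofRealHom_eq_coe, Pi.star_apply]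
  refine Finset.sum_congr rfl fun i _ => Finset.sum_congr rfl fun j _ => ?_
  have h : (starRingEnd ℂ) (v i) * ((M i j : ℂ) * v j) = (M i j : ℂ) * ((starRingEnd ℂ) (v i) * v j) := by ring
  rw [show star (v i) = (starRingEnd ℂ) (v i) from rfl, h]
  simp

lemma q_parallelogram (M : Matrix (Fin d) (Fin d) ℝ) (v w : Fin d → ℂ) :
    q M (fun j => v j + w j) + q M (fun j => v j - w j) = 2 * q M v + 2 * q M w := by
  simp only [q, Finset.mul_sum, ← Finset.sum_add_distrib]
  refine Finset.sum_congr rfl fun i _ => Finset.sum_congr rfl fun j _ => ?_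
  have h : ((starRingEnd ℂ) (v i + w i) * (v j + w j)) + ((starRingEnd ℂ) (v i - w i) * (v j - w j))
      = ((starRingEnd ℂ) (v i) * v j + (starRingEnd ℂ) (v i) * v j)
        + ((starRingEnd ℂ) (w i) * w j + (starRingEnd ℂ) (w i) * w j) := by
    simp only [map_add, map_sub]; ring
  have h2 := congrArg Complex.re h
  simp only [Complex.add_re] at h2
  linear_combination M i j * h2

lemma q_neg (M : Matrix (Fin d) (Fin d) ℝ) (v : Fin d → ℂ) :
    q M (fun j => -(v j)) = q M v := by
  simp [q]

lemma q_real (M : Matrix (Fin d) (Fin d) ℝ) (w : Fin d → ℝ) :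
    q M (fun j => (w j : ℂ)) = ∑ i, w i * (M *ᵥ w) i := by
  simp only [q, Matrix.mulVec, dotProduct, Finset.mul_sum]
  refine Finset.sum_congr rfl fun i _ => Finset.sum_congr rfl fun j _ => ?_
  simp [← Complex.ofReal_mul]
  ring

variable {B : Matrix (Fin d) (Fin d) ℝ} {α : ℝ}

section PD
variable (hα : 0 < α) (hsym : B.IsSymm)
  (hpos : ∀ v : Fin d → ℂ, α * ∑ j, ‖v j‖ ^ 2 ≤ q B v)

include hα hpos

lemma q_nonneg (v : Fin d → ℂ) : 0 ≤ q B v :=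
  le_trans (by positivity) (hpos v)

lemma det_ne_zero : B.det ≠ 0 := by
  intro h
  obtain ⟨v, hv0, hBv⟩ := Matrix.exists_mulVec_eq_zero_iff.mpr h
  have hq : q B (fun j => (v j : ℂ)) = 0 := by
    rw [q_real]; simp [hBv]
  have hle := hpos (fun j => (v j : ℂ))
  rw [hq] at hle
  apply hv0
  funext j
  have h1 : ∀ k ∈ Finset.univ, (0:ℝ) ≤ ‖(v k : ℂ)‖ ^ 2 := fun k _ => by positivity
  have hsum0 : ∑ k, ‖(v k : ℂ)‖ ^ 2 = 0 := by
    have hge : (0:ℝ) ≤ ∑ k, ‖(v k : ℂ)‖ ^ 2 := Finset.sum_nonneg h1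
    nlinarith
  have h2 := Finset.single_le_sum h1 (Finset.mem_univ j)
  rw [hsum0] at h2
  have h3 : ‖(v j : ℂ)‖ = 0 := by nlinarith [norm_nonneg ((v j : ℂ)), sq_nonneg ‖(v j : ℂ)‖]
  simpa using norm_eq_zero.mp h3

lemma isUnit_det : IsUnit B.det := isUnit_iff_ne_zero.mpr (det_ne_zero hα hpos)

include hsym

lemma q_inv_mulC (v : Fin d → ℂ) : q B⁻¹ (mulC B v) = q B v := by
  have hu := isUnit_det hα hpos
  set f := (⇑Complex.ofRealHom : ℝ → ℂ)
  have hmm : (B.map f) * ((B⁻¹.map f) * (B.map f)) = B.map f := by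
    rw [← mul_assoc, ← Matrix.map_mul, Matrix.mul_nonsing_inv _ hu, ← Matrix.map_mul,
      Matrix.one_mul]
  have hherm : (B.map f).conjTranspose = B.map f := by
    ext i j
    simp [Matrix.conjTranspose_apply, Matrix.map_apply, f, hsym.apply i j]
  rw [q_eq, q_eq, mulC_eq_mulVec, Matrix.star_mulVec, hherm,
    Matrix.mulVec_mulVec, ← dotProduct_mulVec, Matrix.mulVec_mulVec, hmm]

omit hsym in
lemma mulC_inv_cancel (w : Fin d → ℂ) : mulC B (mulC B⁻¹ w) = w := by
  have hu := isUnit_det hα hpos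
  rw [mulC_eq_mulVec, mulC_eq_mulVec, Matrix.mulVec_mulVec, ← Matrix.map_mul,
    Matrix.mul_nonsing_inv _ hu]
  simp

lemma q_inv_nonneg (w : Fin d → ℂ) : 0 ≤ q B⁻¹ w := by
  have h := q_inv_mulC hα hsym hpos (mulC B⁻¹ w)
  rw [mulC_inv_cancel hα hpos] at h
  rw [h]
  exact q_nonneg hα hpos _

lemma q_inv_sub_le (v w : Fin d → ℂ) :
    q B⁻¹ (fun j => v j - w j) ≤ 2 * q B⁻¹ v + 2 * q B⁻¹ w := by
  have hp := q_parallelogram B⁻¹ v w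
  have h0 := q_inv_nonneg hα hsym hpos (fun j => v j + w j)
  linarith

lemma inv_entry_bound (i j : Fin d) : |B⁻¹ i j| ≤ α⁻¹ := by
  have hu := isUnit_det hα hpos
  set w : Fin d → ℝ := fun k => B⁻¹ k j with hw
  have hBw : B *ᵥ w = Pi.single j 1 := by
    have : w = B⁻¹ *ᵥ Pi.single j 1 := by
      funext k; simp [hw, Matrix.mulVec_single]
    rw [this, Matrix.mulVec_mulVec, Matrix.mul_nonsing_inv _ hu, Matrix.one_mulVec]
  have hq : q B (fun k => (w k : ℂ)) = w j := by
    rw [q_real, hBw]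
    simp [Pi.single_apply]
  have hle := hpos (fun k => (w k : ℂ))
  rw [hq] at hle
  have hnn : ∀ k ∈ Finset.univ, (0:ℝ) ≤ w k ^ 2 := fun k _ => sq_nonneg _
  have hnorm : ∑ k, ‖((w k : ℝ) : ℂ)‖ ^ 2 = ∑ k, w k ^ 2 := by
    refine Finset.sum_congr rfl fun k _ => ?_
    simp [Complex.norm_real, sq_abs]
  rw [hnorm] at hle
  set S := ∑ k, w k ^ 2 with hS
  have hSnn : 0 ≤ S := Finset.sum_nonneg hnn
  have hj2 : w j ^ 2 ≤ S := Finset.single_le_sum hnn (Finset.mem_univ j)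
  have hi2 : w i ^ 2 ≤ S := Finset.single_le_sum hnn (Finset.mem_univ i)
  have hSle : S ≤ α⁻¹ ^ 2 := by
    rcases eq_or_lt_of_le hSnn with h0 | h0
    · rw [← h0]; positivity
    · have h6 : 0 ≤ α * S := by positivity
      have h4 : (α * S) * (α * S) ≤ S := by
        nlinarith [mul_self_le_mul_self h6 hle, hj2]
      have h7 : α ^ 2 * S ≤ 1 := by
        have := le_of_mul_le_mul_right (by nlinarith : (α ^ 2 * S) * S ≤ 1 * S) h0
        linarith
      calc S = (α ^ 2 * S) * α⁻¹ ^ 2 := by field_simp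
        _ ≤ 1 * α⁻¹ ^ 2 := by nlinarith [sq_nonneg α⁻¹]
        _ = α⁻¹ ^ 2 := one_mul _
  have : |B⁻¹ i j| ^ 2 ≤ α⁻¹ ^ 2 := by
    rw [_root_.sq_abs]
    exact le_trans hi2 hSle
  have hinv : 0 < α⁻¹ := by positivity
  nlinarith [abs_nonneg (B⁻¹ i j), sq_nonneg (|B⁻¹ i j| - α⁻¹)]

end PD
variable {X : Type*} [MeasurableSpace X] {μ : Measure X}

lemma ae_bound {F : Type*} [NormedAddCommGroup F] {f : X → F} (hf : MemLp f ⊤ μ) :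
    ∀ᵐ x ∂μ, ‖f x‖ ≤ (eLpNorm f ⊤ μ).toReal := by
  have h := ae_le_eLpNormEssSup (f := f) (μ := μ)
  filter_upwards [h] with x hx
  have h1 : (‖f x‖₊ : ℝ≥0∞) ≤ eLpNorm f ⊤ μ := by
    rw [eLpNorm_exponent_top]; exact_mod_cast hx
  have h2 : eLpNorm f ⊤ μ ≠ ⊤ := hf.2.ne
  calc ‖f x‖ = ((‖f x‖₊ : ℝ≥0∞)).toReal := by simp
    _ ≤ (eLpNorm f ⊤ μ).toReal := ENNReal.toReal_mono h2 h1

lemma L2mul {v w : X → ℂ} (hv : MemLp v 2 μ) (hw : MemLp w 2 μ) :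
    Integrable (fun x => v x * w x) μ := by
  have h : MemLp (v • w) 1 μ := hw.smul hv (hpqr := ⟨by rw [ENNReal.inv_two_add_inv_two, inv_one]⟩)
  have := memLp_one_iff_integrable.mp h
  exact this

lemma memℒp_conj {v : X → ℂ} (hv : MemLp v 2 μ) :
    MemLp (fun x => (starRingEnd ℂ) (v x)) 2 μ := by
  refine MemLp.of_le hv (RCLike.continuous_conj.comp_aestronglyMeasurable hv.1) ?_
  filter_upwards with x
  simp

/-- integrability of matrix-weighted quadratic integrand -/
lemma int_q {d : ℕ} {M : X → Matrix (Fin d) (Fin d) ℝ} {v : X → Fin d → ℂ}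
    (hM : ∀ i j, AEStronglyMeasurable (fun x => M x i j) μ)
    (hMb : ∀ i j, ∃ C : ℝ, ∀ᵐ x ∂μ, |M x i j| ≤ C)
    (hv : ∀ j, MemLp (fun x => v x j) 2 μ) :
    Integrable (fun x => ∑ i, ∑ j, M x i j * ((starRingEnd ℂ) (v x i) * v x j).re) μ := by
  apply integrable_finset_sum
  intro i _
  apply integrable_finset_sum
  intro j _
  obtain ⟨C, hC⟩ := hMb i j
  have h1 : Integrable (fun x => ((starRingEnd ℂ) (v x i) * v x j)) μ :=
    L2mul (memℒp_conj (hv i)) (hv j)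
  have h2 : Integrable (fun x => ((starRingEnd ℂ) (v x i) * v x j).re) μ := h1.re
  exact h2.bdd_mul (hM i j) (by filter_upwards [hC] with x hx; simpa using hx)

end RCDAux



namespace RCDAux2
lemma meas_det {d : ℕ} : Measurable fun M : Fin d → Fin d → ℝ => Matrix.det (Matrix.of M) := by
  have h : (fun M : Fin d → Fin d → ℝ => Matrix.det (Matrix.of M))
      = fun M => ∑ σ : Equiv.Perm (Fin d), ((Equiv.Perm.sign σ : ℤ) : ℝ) * ∏ i, M (σ i) i := by
    funext M; rw [Matrix.det_apply']; rfl
  rw [h]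
  refine Finset.measurable_sum _ fun σ _ => ?_
  exact (measurable_const.mul (Finset.measurable_prod _ fun i _ =>
    (measurable_pi_apply i).comp (measurable_pi_apply (σ i))))

lemma meas_inv_entry {d : ℕ} (i j : Fin d) :
    Measurable fun M : Fin d → Fin d → ℝ => (Matrix.of M)⁻¹ i j := by
  have h1 : (fun M : Fin d → Fin d → ℝ => (Matrix.of M)⁻¹ i j)
      = fun M => (Matrix.det (Matrix.of M))⁻¹ * Matrix.adjugate (Matrix.of M) i j := by
    funext M; rw [Matrix.inv_def, Matrix.smul_apply, smul_eq_mul, Ring.inverse_eq_inv']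
  rw [h1]
  refine (meas_det.inv).mul ?_
  have h2 : (fun M : Fin d → Fin d → ℝ => Matrix.adjugate (Matrix.of M) i j)
      = (fun N : Fin d → Fin d → ℝ => Matrix.det (Matrix.of N)) ∘
        (fun M : Fin d → Fin d → ℝ => fun k l =>
          if k = j then (Pi.single i 1 : Fin d → ℝ) l else M k l) := by
    funext M
    simp only [Function.comp_apply, Matrix.adjugate_apply]
    congr 1
    funext k l
    rw [Matrix.updateRow_apply]
    rfl
  rw [h2]
  refine meas_det.comp ?_
  refine measurable_pi_lambda _ fun k => measurable_pi_lambda _ fun l => ?_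
  by_cases hk : k = j
  · simp [hk]
  · simp only [hk, ↓reduceIte]
    exact (measurable_pi_apply l).comp (measurable_pi_apply k)

lemma scalar1 {c₀ c dbv : ℝ} {e r : ℂ} (hc₀ : 0 < c₀) (hc : c₀ ≤ c) (hdb : 0 ≤ -dbv) :
    c⁻¹ * ‖(c : ℂ) * e + r‖ ^ 2 ≤ 2 * ((c - dbv) * ‖e‖ ^ 2) + 2 * (c⁻¹ * ‖r‖ ^ 2) := by
  have hc1 : 0 < c := lt_of_lt_of_le hc₀ hc
  have hn : ‖(c : ℂ) * e + r‖ ≤ c * ‖e‖ + ‖r‖ := by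
    refine (norm_add_le _ _).trans ?_
    rw [norm_mul, Complex.norm_real, Real.norm_eq_abs, abs_of_pos hc1]
  have hsq : ‖(c : ℂ) * e + r‖ ^ 2 ≤ 2 * (c * ‖e‖) ^ 2 + 2 * ‖r‖ ^ 2 := by
    nlinarith [norm_nonneg ((c : ℂ) * e + r), norm_nonneg e, norm_nonneg r,
      sq_nonneg (c * ‖e‖ - ‖r‖), mul_nonneg hc1.le (norm_nonneg e)]
  have hinv : 0 < c⁻¹ := by positivity
  have key : c⁻¹ * ‖(c : ℂ) * e + r‖ ^ 2 ≤ c⁻¹ * (2 * (c * ‖e‖) ^ 2 + 2 * ‖r‖ ^ 2) := by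
    nlinarith
  have hid : c⁻¹ * (2 * (c * ‖e‖) ^ 2 + 2 * ‖r‖ ^ 2) = 2 * (c * ‖e‖ ^ 2) + 2 * (c⁻¹ * ‖r‖ ^ 2) := by
    field_simp
  nlinarith [mul_nonneg (neg_nonneg.mpr (neg_nonneg.mp hdb)) (sq_nonneg ‖e‖)]

end RCDAux2


/-- Theorem 4.1, improved lower bound: if in addition `-div b ≥ 0` on `Ω_c`, then
`(1/2)(‖f - cũ - b·∇ũ + div p̃‖²_{Ω_c,c⁻¹} + ‖p̃ - A∇ũ‖²_{A⁻¹}) + ‖f - b·∇ũ + div p̃‖²_{Ω₀}`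
bounds the combined error from below. -/
theorem statement13 (d : ℕ) (Ω Ω₀ : Set (E d)) (μ : Measure (E d))
    (hμ : μ = volume.restrict Ω) (hΩ : Bornology.IsBounded Ω)
    (hΩ₀m : MeasurableSet Ω₀) (hΩ₀ : Ω₀ ⊆ Ω)
    (A : E d → Matrix (Fin d) (Fin d) ℝ) (α : ℝ) (hA : IsDiffusion μ A α)
    (b : E d → Fin d → ℝ) (db : E d → ℝ)
    (hb : MemLinfV μ b) (hdb : MemLp db ⊤ μ) (hdiv : IsDiv Ω μ b db)
    (c : E d → ℝ) (hcL : MemLp c ⊤ μ) (hcpos : ∀ᵐ x ∂μ, 0 ≤ c x)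
    (c₀ : ℝ) (hc₀ : 0 < c₀)
    (hc0 : ∀ᵐ x ∂(volume.restrict Ω₀), c x = 0)
    (hcc : ∀ᵐ x ∂(volume.restrict (Ω \ Ω₀)), c₀ ≤ c x)
    (hcb : ∀ᵐ x ∂μ, 0 ≤ c x - db x)
    (CF : ℝ) (hCF : 0 < CF) (hF : Friedrichs Ω μ CF)
    (hdbneg : ∀ᵐ x ∂(volume.restrict (Ω \ Ω₀)), 0 ≤ -db x)
    (f : E d → ℂ) (hf : MemLp f 2 μ)
    (u : E d → ℂ) (gu : E d → Fin d → ℂ) (hu : MemH10 Ω μ u gu)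
    (p : E d → Fin d → ℂ) (dp : E d → ℂ) (hp : MemHdiv Ω μ p dp)
    (hpA : ∀ᵐ x ∂μ, p x = mul (A x) (gu x))
    (heq : ∀ᵐ x ∂μ, -dp x + bdot b gu x + (c x : ℂ) * u x = f x)
    (u' : E d → ℂ) (gu' : E d → Fin d → ℂ) (hu' : MemH10 Ω μ u' gu')
    (p' : E d → Fin d → ℂ) (dp' : E d → ℂ) (hp' : MemHdiv Ω μ p' dp') :
    (1 / 2) * (nsq (volume.restrict (Ω \ Ω₀)) (fun x => (c x)⁻¹)
            (fun x => f x - (c x : ℂ) * u' x - bdot b gu' x + dp' x)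
          + nsqM μ (fun x => (A x)⁻¹) (fun x j => p' x j - mul (A x) (gu' x) j))
      + nsq (volume.restrict Ω₀) (fun _ => 1) (fun x => f x - bdot b gu' x + dp' x)
    ≤ nsq μ (fun x => c x - db x) (fun x => u x - u' x)
      + nsqM μ A (fun x j => gu x j - gu' x j)
      + nsqM μ (fun x => (A x)⁻¹) (fun x j => p x j - p' x j)
      + nsq μ (fun x => (c x + Set.indicator Ω₀ (fun _ => (1 : ℝ)) x)⁻¹)
          (fun x => bdot b (fun y k => gu y k - gu' y k) x - (dp x - dp' x)) := by
  have hα := hA.2.2.1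
  have hSym := hA.1
  have hPos := hA.2.2.2
  set ν₁ := volume.restrict (Ω \ Ω₀) with hν₁
  set ν₂ := volume.restrict Ω₀ with hν₂
  have hμν : μ = ν₁ + ν₂ := by
    rw [hμ, hν₁, hν₂, ← Measure.restrict_union Set.disjoint_sdiff_left hΩ₀m,
      Set.diff_union_of_subset hΩ₀]
  -- membership facts
  have hg2 : ∀ j, MemLp (fun x => gu x j - gu' x j) 2 μ := fun j => (hu.2.1 j).sub (hu'.2.1 j)
  have ha2 : ∀ j, MemLp (fun x => p x j - p' x j) 2 μ := fun j => (hp.1 j).sub (hp'.1 j)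
  have he2 : MemLp (fun x => u x - u' x) 2 μ := hu.1.sub hu'.1
  have hbg : ∀ j : Fin d, MemLp (fun x => (b x j : ℂ) * (gu x j - gu' x j)) 2 μ := by
    intro j
    have h : MemLp ((fun x => b x j) • fun x => gu x j - gu' x j) 2 μ := (hg2 j).smul (hb j)
    have hfun : ((fun x => b x j) • fun x => gu x j - gu' x j)
        = fun x => ((b x j : ℂ)) * (gu x j - gu' x j) := by
      funext x
      simp only [Pi.smul_apply', Complex.real_smul]
    rwa [hfun] at h
  have hbdot2 : MemLp (fun x => bdot b (fun y k => gu y k - gu' y k) x) 2 μ := by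
    have h := memLp_finset_sum (μ := μ) (p := 2) Finset.univ
      (f := fun j (x : E d) => (b x j : ℂ) * (gu x j - gu' x j)) (fun j _ => hbg j)
    simpa [RCD.bdot] using h
  have hr2 : MemLp (fun x => bdot b (fun y k => gu y k - gu' y k) x - (dp x - dp' x)) 2 μ :=
    hbdot2.sub ((hp.2.1).sub (hp'.2.1))
  have hrsq : Integrable
      (fun x => ‖bdot b (fun y k => gu y k - gu' y k) x - (dp x - dp' x)‖ ^ 2) μ :=
    hr2.norm.integrable_sq
  have hesq : Integrable (fun x => ‖u x - u' x‖ ^ 2) μ := he2.norm.integrable_sq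
  -- integrability of the four RHS integrands
  have hcdbL : MemLp (fun x => c x - db x) ⊤ μ := hcL.sub hdb
  have hW1 : Integrable (fun x => (c x - db x) * ‖u x - u' x‖ ^ 2) μ :=
    hesq.bdd_mul hcdbL.1 (RCDAux.ae_bound hcdbL)
  have hAb : ∀ i j, ∃ C : ℝ, ∀ᵐ x ∂μ, |A x i j| ≤ C := fun i j =>
    ⟨_, by filter_upwards [RCDAux.ae_bound (hA.2.1 i j)] with x hx
           simpa [Real.norm_eq_abs] using hx⟩
  have hW2 : Integrable (fun x => ∑ i, ∑ j,
      A x i j * ((starRingEnd ℂ) (gu x i - gu' x i) * (gu x j - gu' x j)).re) μ :=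
    RCDAux.int_q (fun i j => (hA.2.1 i j).1) hAb hg2
  have hAinv_meas : ∀ i j, AEStronglyMeasurable (fun x => (A x)⁻¹ i j) μ := by
    intro i j
    have hmeas : Measurable fun x =>
        (Matrix.of (fun k l => ((hA.2.1 k l).1.mk _) x : Fin d → Fin d → ℝ))⁻¹ i j :=
      (RCDAux2.meas_inv_entry i j).comp (measurable_pi_lambda _ fun k =>
        measurable_pi_lambda _ fun l => (hA.2.1 k l).1.measurable_mk)
    have hae : (fun x =>
        (Matrix.of (fun k l => ((hA.2.1 k l).1.mk _) x : Fin d → Fin d → ℝ))⁻¹ i j)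
        =ᵐ[μ] fun x => (A x)⁻¹ i j := by
      have h := ae_all_iff.mpr (fun kl : Fin d × Fin d => (hA.2.1 kl.1 kl.2).1.ae_eq_mk)
      filter_upwards [h] with x hx
      have hmat : (Matrix.of (fun k l => ((hA.2.1 k l).1.mk _) x : Fin d → Fin d → ℝ)) = A x := by
        ext k l
        exact (hx (k, l)).symm
      rw [hmat]
    exact (hmeas.aestronglyMeasurable).congr hae
  have hAinv_bound : ∀ i j, ∃ C : ℝ, ∀ᵐ x ∂μ, |(A x)⁻¹ i j| ≤ C := fun i j =>
    ⟨α⁻¹, Eventually.of_forall fun x =>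
      RCDAux.inv_entry_bound hα (hSym x) (hPos x) i j⟩
  have hW3 : Integrable (fun x => ∑ i, ∑ j,
      (A x)⁻¹ i j * ((starRingEnd ℂ) (p x i - p' x i) * (p x j - p' x j)).re) μ :=
    RCDAux.int_q hAinv_meas hAinv_bound ha2
  -- ae splitting
  have hsplit : ∀ {P : E d → Prop}, (∀ᵐ x ∂μ, P x) → (∀ᵐ x ∂ν₁, P x) ∧ (∀ᵐ x ∂ν₂, P x) := by
    intro P h
    rw [hμν] at h
    exact ae_add_measure_iff.mp h
  have hmerge : ∀ {P : E d → Prop},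
      (∀ᵐ x ∂ν₁, P x) → (∀ᵐ x ∂ν₂, P x) → (∀ᵐ x ∂μ, P x) := by
    intro P h1 h2
    rw [hμν]
    exact ae_add_measure_iff.mpr ⟨h1, h2⟩
  have hind0 : ∀ᵐ x ∂ν₁, x ∉ Ω₀ := by
    apply measure_eq_zero_iff_ae_notMem.mp
    rw [hν₁, Measure.restrict_apply hΩ₀m, Set.inter_diff_self]
    exact measure_empty
  have hmem2 : ∀ᵐ x ∂ν₂, x ∈ Ω₀ := by
    rw [hν₂]
    exact ae_restrict_mem hΩ₀m
  have heqs := hsplit heq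
  have hcbs := hsplit hcb
  -- W4 integrable
  have hhc_meas : AEStronglyMeasurable
      (fun x => (c x + Set.indicator Ω₀ (fun _ => (1:ℝ)) x)⁻¹) μ := by
    have h1 : AEMeasurable c μ := hcL.1.aemeasurable
    have h2 : Measurable (Set.indicator Ω₀ (fun _ => (1:ℝ))) :=
      measurable_const.indicator hΩ₀m
    exact ((h1.add h2.aemeasurable).inv).aestronglyMeasurable
  have hhc_bound : ∀ᵐ x ∂μ,
      ‖(c x + Set.indicator Ω₀ (fun _ => (1:ℝ)) x)⁻¹‖ ≤ max 1 c₀⁻¹ := by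
    apply hmerge
    · filter_upwards [hcc, hind0] with x h1 h2
      rw [Set.indicator_of_notMem h2, add_zero, Real.norm_eq_abs]
      have hcx : 0 < c x := lt_of_lt_of_le hc₀ h1
      rw [abs_of_pos (by positivity)]
      refine le_trans ?_ (le_max_right _ _)
      have h3 : c₀ * c₀⁻¹ = 1 := mul_inv_cancel₀ hc₀.ne'
      have h4 : c x * (c x)⁻¹ = 1 := mul_inv_cancel₀ hcx.ne'
      nlinarith [inv_nonneg.mpr hcx.le, inv_nonneg.mpr hc₀.le]
    · filter_upwards [hc0, hmem2] with x h1 h2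
      rw [Set.indicator_of_mem h2, h1, Real.norm_eq_abs]
      norm_num
  have hW4 : Integrable (fun x => (c x + Set.indicator Ω₀ (fun _ => (1:ℝ)) x)⁻¹ *
      ‖bdot b (fun y k => gu y k - gu' y k) x - (dp x - dp' x)‖ ^ 2) μ :=
    hrsq.bdd_mul hhc_meas hhc_bound
  obtain ⟨hW1a, hW1b⟩ := integrable_add_measure.mp (hμν ▸ hW1)
  obtain ⟨hW4a, hW4b⟩ := integrable_add_measure.mp (hμν ▸ hW4)
  -- estimate C2 (flux part, over μ)
  have hC2 : (∫ x, ∑ i, ∑ j, (A x)⁻¹ i j *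
        ((starRingEnd ℂ) (p' x i - mul (A x) (gu' x) i) * (p' x j - mul (A x) (gu' x) j)).re ∂μ)
      ≤ ∫ x, (2 * (∑ i, ∑ j, A x i j *
            ((starRingEnd ℂ) (gu x i - gu' x i) * (gu x j - gu' x j)).re)
          + 2 * (∑ i, ∑ j, (A x)⁻¹ i j *
            ((starRingEnd ℂ) (p x i - p' x i) * (p x j - p' x j)).re)) ∂μ := by
    refine integral_mono_of_nonneg
      (Eventually.of_forall fun x =>
        RCDAux.q_inv_nonneg hα (hSym x) (hPos x) (fun j => p' x j - mul (A x) (gu' x) j))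
      ((hW2.const_mul 2).add (hW3.const_mul 2)) ?_
    filter_upwards [hpA] with x hx
    have hGx : (fun j => p' x j - mul (A x) (gu' x) j)
        = fun j => mul (A x) (fun k => gu x k - gu' x k) j - (p x j - p' x j) := by
      funext j
      have hms : mul (A x) (fun k => gu x k - gu' x k) j
          = mul (A x) (gu x) j - mul (A x) (gu' x) j := by
        simp [RCD.mul, mul_sub, Finset.sum_sub_distrib]
      rw [hms, ← congrFun hx j]
      ring
    show RCDAux.q (A x)⁻¹ (fun j => p' x j - mul (A x) (gu' x) j)
      ≤ 2 * RCDAux.q (A x) (fun k => gu x k - gu' x k)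
        + 2 * RCDAux.q (A x)⁻¹ (fun j => p x j - p' x j)
    rw [hGx]
    have hkey := RCDAux.q_inv_sub_le hα (hSym x) (hPos x)
      (RCDAux.mulC (A x) (fun k => gu x k - gu' x k)) (fun j => p x j - p' x j)
    have hq1 : RCDAux.q (A x)⁻¹ (RCDAux.mulC (A x) (fun k => gu x k - gu' x k))
        = RCDAux.q (A x) (fun k => gu x k - gu' x k) :=
      RCDAux.q_inv_mulC hα (hSym x) (hPos x) _
    rw [hq1] at hkey
    exact hkey
  have hC2' : (∫ x, ∑ i, ∑ j, (A x)⁻¹ i j *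
        ((starRingEnd ℂ) (p' x i - mul (A x) (gu' x) i) * (p' x j - mul (A x) (gu' x) j)).re ∂μ)
      ≤ 2 * (∫ x, ∑ i, ∑ j, A x i j *
            ((starRingEnd ℂ) (gu x i - gu' x i) * (gu x j - gu' x j)).re ∂μ)
        + 2 * (∫ x, ∑ i, ∑ j, (A x)⁻¹ i j *
            ((starRingEnd ℂ) (p x i - p' x i) * (p x j - p' x j)).re ∂μ) := by
    refine hC2.trans_eq ?_
    rw [integral_add (hW2.const_mul 2) (hW3.const_mul 2), integral_const_mul, integral_const_mul]
  -- estimate C1 (over ν₁)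
  have hC1 : (∫ x, (c x)⁻¹ * ‖f x - (c x : ℂ) * u' x - bdot b gu' x + dp' x‖ ^ 2 ∂ν₁)
      ≤ ∫ x, (2 * ((c x - db x) * ‖u x - u' x‖ ^ 2)
          + 2 * ((c x + Set.indicator Ω₀ (fun _ => (1:ℝ)) x)⁻¹ *
            ‖bdot b (fun y k => gu y k - gu' y k) x - (dp x - dp' x)‖ ^ 2)) ∂ν₁ := by
    refine integral_mono_of_nonneg ?_ ((hW1a.const_mul 2).add (hW4a.const_mul 2)) ?_
    · filter_upwards [hcc] with x h1
      have hcx : 0 < c x := lt_of_lt_of_le hc₀ h1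
      positivity
    · filter_upwards [hcc, hdbneg, heqs.1, hind0] with x h1 h2 h3 h4
      rw [Set.indicator_of_notMem h4, add_zero]
      have hbd : bdot b (fun y k => gu y k - gu' y k) x = bdot b gu x - bdot b gu' x := by
        simp [RCD.bdot, mul_sub, Finset.sum_sub_distrib]
      have hF1 : f x - (c x : ℂ) * u' x - bdot b gu' x + dp' x
          = (c x : ℂ) * (u x - u' x)
            + (bdot b (fun y k => gu y k - gu' y k) x - (dp x - dp' x)) := by
        rw [hbd, ← h3]
        ring
      rw [hF1]
      exact RCDAux2.scalar1 hc₀ h1 h2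
  have hC1' : (∫ x, (c x)⁻¹ * ‖f x - (c x : ℂ) * u' x - bdot b gu' x + dp' x‖ ^ 2 ∂ν₁)
      ≤ 2 * (∫ x, (c x - db x) * ‖u x - u' x‖ ^ 2 ∂ν₁)
        + 2 * (∫ x, (c x + Set.indicator Ω₀ (fun _ => (1:ℝ)) x)⁻¹ *
            ‖bdot b (fun y k => gu y k - gu' y k) x - (dp x - dp' x)‖ ^ 2 ∂ν₁) := by
    refine hC1.trans_eq ?_
    rw [integral_add (hW1a.const_mul 2) (hW4a.const_mul 2), integral_const_mul, integral_const_mul]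
  -- estimate C3 (over ν₂)
  have hC3 : (∫ x, 1 * ‖f x - bdot b gu' x + dp' x‖ ^ 2 ∂ν₂)
      ≤ ∫ x, (c x + Set.indicator Ω₀ (fun _ => (1:ℝ)) x)⁻¹ *
          ‖bdot b (fun y k => gu y k - gu' y k) x - (dp x - dp' x)‖ ^ 2 ∂ν₂ := by
    refine integral_mono_of_nonneg (Eventually.of_forall fun x => by positivity) hW4b ?_
    filter_upwards [hc0, hmem2, heqs.2] with x h1 h2 h3
    rw [Set.indicator_of_mem h2, h1]
    have hbd : bdot b (fun y k => gu y k - gu' y k) x = bdot b gu x - bdot b gu' x := by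
      simp [RCD.bdot, mul_sub, Finset.sum_sub_distrib]
    have hF0 : f x - bdot b gu' x + dp' x
        = bdot b (fun y k => gu y k - gu' y k) x - (dp x - dp' x) := by
      rw [hbd, ← h3, h1]
      push_cast
      ring
    rw [hF0]
    norm_num
  -- splitting of the RHS integrals over μ
  have hJ1 : (∫ x, (c x - db x) * ‖u x - u' x‖ ^ 2 ∂μ)
      = (∫ x, (c x - db x) * ‖u x - u' x‖ ^ 2 ∂ν₁)
        + ∫ x, (c x - db x) * ‖u x - u' x‖ ^ 2 ∂ν₂ := by
    rw [hμν]
    exact integral_add_measure hW1a hW1b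
  have hJ4 : (∫ x, (c x + Set.indicator Ω₀ (fun _ => (1:ℝ)) x)⁻¹ *
        ‖bdot b (fun y k => gu y k - gu' y k) x - (dp x - dp' x)‖ ^ 2 ∂μ)
      = (∫ x, (c x + Set.indicator Ω₀ (fun _ => (1:ℝ)) x)⁻¹ *
          ‖bdot b (fun y k => gu y k - gu' y k) x - (dp x - dp' x)‖ ^ 2 ∂ν₁)
        + ∫ x, (c x + Set.indicator Ω₀ (fun _ => (1:ℝ)) x)⁻¹ *
          ‖bdot b (fun y k => gu y k - gu' y k) x - (dp x - dp' x)‖ ^ 2 ∂ν₂ := by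
    rw [hμν]
    exact integral_add_measure hW4a hW4b
  have hJ1b : 0 ≤ ∫ x, (c x - db x) * ‖u x - u' x‖ ^ 2 ∂ν₂ :=
    integral_nonneg_of_ae (by
      filter_upwards [hcbs.2] with x hx
      exact mul_nonneg hx (sq_nonneg _))
  simp only [RCD.nsq, RCD.nsqM]
  linarith [hC1', hC2', hC3, hJ1, hJ4, hJ1b]
end
end

section
/- Norm equivalence for the combined norm |||·|||: assume c ≥ c₀ > 0, c - div b ≥ 0, and α‖φ‖² ≤ (Aφ,φ). For any (x,y) ∈ H^1_0 × H(div), define N² := ‖x‖²_{c-div b} + ‖∇x‖²_A + ‖y‖²_{A^{-1}} + ‖b·∇x - div y‖²_{c^{-1}} and G² := ‖x‖²_{c-div b} + ‖∇x‖²_A + ‖y‖²_{A^{-1}} + ‖div y‖²_{c^{-1}}. Then (max{2, 1 + 2‖b‖²_∞/(α c₀)})^{-1} N² ≤ G² ≤ 2(1 + ‖b‖²_∞/(α c₀)) N². -/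
open MeasureTheory Complex Filter Finset

noncomputable section

namespace Help
open scoped ENNReal NNReal

variable {α : Type*} {m : MeasurableSpace α} {μ : Measure α}

lemma integrable_mul_L2 {f g : α → ℝ} (hf : MemLp f 2 μ) (hg : MemLp g 2 μ) :
    Integrable (fun x => f x * g x) μ := by
  have h : MemLp (f • g) 1 μ :=
    hg.smul hf
  exact memLp_one_iff_integrable.mp h

lemma ae_bound_of_memLinf {f : α → ℝ} (hf : MemLp f ⊤ μ) :
    ∀ᵐ x ∂μ, |f x| ≤ (eLpNorm f ⊤ μ).toReal := by
  filter_upwards [MeasureTheory.ae_le_eLpNormEssSup (μ := μ) (f := f)] with x hx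
  have hne : eLpNorm f ⊤ μ ≠ ⊤ := hf.eLpNorm_ne_top
  rw [eLpNorm_exponent_top] at hne
  have := ENNReal.toReal_mono hne (by exact_mod_cast hx : ((‖f x‖₊ : ℝ≥0∞)) ≤ eLpNormEssSup f μ)
  simpa [eLpNorm_exponent_top, Real.norm_eq_abs] using this

end Help

namespace Help2

open Matrix

lemma qsplit {d : ℕ} (M : Matrix (Fin d) (Fin d) ℝ) (v : Fin d → ℂ) :
    ∑ i, ∑ j, M i j * ((starRingEnd ℂ) (v i) * v j).re
      = dotProduct (fun j => (v j).re) (M *ᵥ fun j => (v j).re)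
        + dotProduct (fun j => (v j).im) (M *ᵥ fun j => (v j).im) := by
  simp only [dotProduct, Matrix.mulVec, Finset.mul_sum, ← Finset.sum_add_distrib]
  refine Finset.sum_congr rfl fun i _ => Finset.sum_congr rfl fun j _ => ?_
  simp [Complex.mul_re]
  ring

lemma qform_nonneg {d : ℕ} {M : Matrix (Fin d) (Fin d) ℝ} (hM : M.PosSemidef)
    (v : Fin d → ℂ) :
    0 ≤ ∑ i, ∑ j, M i j * ((starRingEnd ℂ) (v i) * v j).re := by
  rw [qsplit]
  have h1 := (Matrix.posSemidef_iff_dotProduct_mulVec.mp hM).2 (fun j => (v j).re)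
  have h2 := (Matrix.posSemidef_iff_dotProduct_mulVec.mp hM).2 (fun j => (v j).im)
  simp only [star_trivial] at h1 h2
  linarith

lemma posdef_of_coercive {d : ℕ} {M : Matrix (Fin d) (Fin d) ℝ} {α : ℝ} (hα : 0 < α)
    (hsym : M.IsSymm)
    (hco : ∀ v : Fin d → ℂ, α * ∑ j, ‖v j‖ ^ 2
      ≤ ∑ i, ∑ j, M i j * ((starRingEnd ℂ) (v i) * v j).re) :
    M.PosDef := by
  rw [Matrix.posDef_iff_dotProduct_mulVec]
  constructor
  · exact Matrix.IsHermitian.ext fun i j => by simpa using hsym.apply i j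
  · intro a ha
    have h := hco fun j => (a j : ℂ)
    rw [qsplit] at h
    simp only [Complex.ofReal_re, Complex.ofReal_im] at h
    have hz : dotProduct a (M *ᵥ fun _ => (0:ℝ)) = 0 := by
      simp [dotProduct, Matrix.mulVec]
    have hn : ∀ j, ‖((a j : ℝ) : ℂ)‖ ^ 2 = a j ^ 2 := by
      intro j; rw [Complex.norm_real]; exact sq_abs _
    simp only [hn] at h
    have hpos : 0 < ∑ j, a j ^ 2 := by
      obtain ⟨j, hj⟩ := Function.ne_iff.mp ha
      exact Finset.sum_pos' (fun i _ => sq_nonneg _) ⟨j, Finset.mem_univ j, by exact pow_pos (abs_pos.mpr hj) 2 |>.trans_eq (sq_abs _)⟩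
    have : (0:ℝ) < α * ∑ j, a j ^ 2 := by positivity
    simp only [star_trivial]
    calc (0:ℝ) < α * ∑ j, a j ^ 2 := this
      _ ≤ _ := by
          refine h.trans_eq ?_
          simp [hz]

end Help2

namespace Help3

lemma arith {S1 S2 S3 T U B K M : ℝ} (hS1 : 0 ≤ S1) (hS2 : 0 ≤ S2) (hS3 : 0 ≤ S3)
    (hT : 0 ≤ T) (hU : 0 ≤ U) (hBle : B ≤ K * S2) (hUT : U ≤ 2 * B + 2 * T)
    (hTU : T ≤ 2 * B + 2 * U) (hKnn : 0 ≤ K) (hM2 : 2 ≤ M) (hMK : 1 + 2 * K ≤ M) :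
    M⁻¹ * (S1 + S2 + S3 + T) ≤ S1 + S2 + S3 + U ∧
      S1 + S2 + S3 + U ≤ 2 * (1 + K) * (S1 + S2 + S3 + T) := by
  have hMpos : (0:ℝ) < M := lt_of_lt_of_le (by norm_num) hM2
  constructor
  · rw [inv_mul_le_iff₀ hMpos]
    nlinarith [mul_nonneg (by linarith : (0:ℝ) ≤ M - 2) hU,
      mul_nonneg (by linarith : (0:ℝ) ≤ M - 1) hS1,
      mul_nonneg (by linarith : (0:ℝ) ≤ M - 1) hS3,
      mul_nonneg (by linarith : (0:ℝ) ≤ M - 1 - 2 * K) hS2]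
  · nlinarith [mul_nonneg hKnn hS1, mul_nonneg hKnn hS2, mul_nonneg hKnn hS3,
      mul_nonneg hKnn hT]

end Help3


open RCD
/-- Theorem B.1 (norm equivalence for `|||·|||`): assume `c ≥ c₀ > 0`,
`c - div b ≥ 0`, `α‖φ‖² ≤ (Aφ,φ)`. For `(x,y) ∈ H¹₀ × H(div)` let
`N² = ‖x‖²_{c-div b} + ‖∇x‖²_A + ‖y‖²_{A⁻¹} + ‖b·∇x - div y‖²_{c⁻¹}` and
`G² = ‖x‖²_{c-div b} + ‖∇x‖²_A + ‖y‖²_{A⁻¹} + ‖div y‖²_{c⁻¹}`. Then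
`(max{2, 1+2‖b‖²_∞/(αc₀)})⁻¹ N² ≤ G² ≤ 2(1+‖b‖²_∞/(αc₀)) N²`. -/
theorem statement17 (d : ℕ) (Ω : Set (E d)) (μ : Measure (E d))
    (hμ : μ = volume.restrict Ω)
    (A : E d → Matrix (Fin d) (Fin d) ℝ) (α : ℝ) (hA : IsDiffusion μ A α)
    (b : E d → Fin d → ℝ) (db : E d → ℝ)
    (hb : MemLinfV μ b) (hdb : MemLp db ⊤ μ) (hdiv : IsDiv Ω μ b db)
    (c : E d → ℝ) (hcL : MemLp c ⊤ μ)
    (c₀ : ℝ) (hc₀ : 0 < c₀) (hc : ∀ᵐ x ∂μ, c₀ ≤ c x)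
    (hcb : ∀ᵐ x ∂μ, 0 ≤ c x - db x)
    (x : E d → ℂ) (gx : E d → Fin d → ℂ) (hx : MemH10 Ω μ x gx)
    (y : E d → Fin d → ℂ) (dy : E d → ℂ) (hy : MemHdiv Ω μ y dy) :
    (max 2 (1 + 2 * bInfSq μ b / (α * c₀)))⁻¹ *
        (nsq μ (fun z => c z - db z) x + nsqM μ A gx
          + nsqM μ (fun z => (A z)⁻¹) y
          + nsq μ (fun z => (c z)⁻¹) (fun z => bdot b gx z - dy z))
      ≤ nsq μ (fun z => c z - db z) x + nsqM μ A gx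
          + nsqM μ (fun z => (A z)⁻¹) y + nsq μ (fun z => (c z)⁻¹) dy
    ∧ nsq μ (fun z => c z - db z) x + nsqM μ A gx
          + nsqM μ (fun z => (A z)⁻¹) y + nsq μ (fun z => (c z)⁻¹) dy
      ≤ 2 * (1 + bInfSq μ b / (α * c₀)) *
          (nsq μ (fun z => c z - db z) x + nsqM μ A gx
            + nsqM μ (fun z => (A z)⁻¹) y
            + nsq μ (fun z => (c z)⁻¹) (fun z => bdot b gx z - dy z)) := by
  obtain ⟨hAsymm, hAL, hα, hAco⟩ := hA
  have hgx2 : ∀ j, MemLp (fun z => gx z j) 2 μ := hx.2.1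
  have hdy2 : MemLp dy 2 μ := hy.2.1
  have hBBnn : (0:ℝ) ≤ bInfSq μ b := Finset.sum_nonneg fun j _ => sq_nonneg _
  set BB := bInfSq μ b with hBBdef
  set K := BB / (α * c₀) with hKdef
  have hKnn : 0 ≤ K := div_nonneg hBBnn (by positivity)
  -- bdot ∈ L²
  have hbdot2 : MemLp (fun z => bdot b gx z) 2 μ := by
    have hterm : ∀ j ∈ Finset.univ, MemLp (fun z => (b z j : ℂ) * gx z j) 2 μ := by
      intro j _
      have h : MemLp ((fun z => b z j) • fun z => gx z j) 2 μ := (hgx2 j).smul (hb j)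
      have he : ((fun z => b z j) • fun z => gx z j) = fun z => (b z j : ℂ) * gx z j := by
        funext z; simp [Pi.smul_apply', Complex.real_smul]
      rwa [he] at h
    have := memLp_finsetSum Finset.univ hterm
    simpa [bdot] using this
  -- integrability of c⁻¹-weighted squared norms
  have hcinv_int : ∀ (f : E d → ℂ), MemLp f 2 μ →
      Integrable (fun z => (c z)⁻¹ * ‖f z‖ ^ 2) μ := by
    intro f hf
    have hint : Integrable (fun z => c₀⁻¹ * ‖f z‖ ^ 2) μ :=
      (hf.norm.integrable_sq).const_mul _
    refine hint.mono' ?_ ?_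
    · exact (aestronglyMeasurable_iff_aemeasurable).2
        ((hcL.aestronglyMeasurable.aemeasurable.inv).mul
          ((hf.aestronglyMeasurable.norm.aemeasurable).pow_const 2))
    · filter_upwards [hc] with z hz
      have h0 : 0 < c z := lt_of_lt_of_le hc₀ hz
      have hle : (c z)⁻¹ ≤ c₀⁻¹ := inv_anti₀ hc₀ hz
      rw [Real.norm_eq_abs,
        _root_.abs_of_nonneg (mul_nonneg (inv_nonneg.2 h0.le) (sq_nonneg _))]
      exact mul_le_mul_of_nonneg_right hle (sq_nonneg _)
  -- nonnegativity
  have hS1 : 0 ≤ nsq μ (fun z => c z - db z) x :=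
    integral_nonneg_of_ae (by filter_upwards [hcb] with z hz; positivity)
  have hS2 : 0 ≤ nsqM μ A gx := by
    refine integral_nonneg fun z => ?_
    exact le_trans (mul_nonneg hα.le (Finset.sum_nonneg fun j _ => sq_nonneg _)) (hAco z (gx z))
  have hApos : ∀ z, ((A z)⁻¹).PosSemidef := fun z =>
    ((Help2.posdef_of_coercive hα (hAsymm z) (fun v => hAco z v)).inv).posSemidef
  have hS3 : 0 ≤ nsqM μ (fun z => (A z)⁻¹) y :=
    integral_nonneg fun z => Help2.qform_nonneg (hApos z) (y z)
  have hcinv_nn : ∀ᵐ z ∂μ, 0 ≤ (c z)⁻¹ := by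
    filter_upwards [hc] with z hz; exact inv_nonneg.2 (le_trans hc₀.le hz)
  have hnsq_nn : ∀ (f : E d → ℂ), 0 ≤ nsq μ (fun z => (c z)⁻¹) f := by
    intro f
    refine integral_nonneg_of_ae ?_
    filter_upwards [hcinv_nn] with z hz; positivity
  have hT : 0 ≤ nsq μ (fun z => (c z)⁻¹) (fun z => bdot b gx z - dy z) := hnsq_nn _
  have hU : 0 ≤ nsq μ (fun z => (c z)⁻¹) dy := hnsq_nn _
  -- integrability of the A-form of gx
  have hAint : Integrable
      (fun z => ∑ i, ∑ j, A z i j * ((starRingEnd ℂ) (gx z i) * gx z j).re) μ := by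
    refine integrable_finset_sum _ fun i _ => integrable_finset_sum _ fun j _ => ?_
    have h1 : Integrable (fun z => (gx z i).re * (gx z j).re) μ :=
      Help.integrable_mul_L2 (hgx2 i).re (hgx2 j).re
    have h2 : Integrable (fun z => (gx z i).im * (gx z j).im) μ :=
      Help.integrable_mul_L2 (hgx2 i).im (hgx2 j).im
    have hre : Integrable (fun z => ((starRingEnd ℂ) (gx z i) * gx z j).re) μ := by
      refine (h1.add h2).congr (Filter.Eventually.of_forall fun z => ?_)
      simp [Complex.mul_re]
    refine (hre.abs.const_mul ((eLpNorm (fun z => A z i j) ⊤ μ).toReal)).mono' ?_ ?_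
    · exact (aestronglyMeasurable_iff_aemeasurable).2
        (((hAL i j).aestronglyMeasurable.aemeasurable).mul hre.aestronglyMeasurable.aemeasurable)
    · filter_upwards [Help.ae_bound_of_memLinf (hAL i j)] with z hz
      rw [Real.norm_eq_abs, abs_mul]
      exact mul_le_mul_of_nonneg_right hz (abs_nonneg _)
  -- key bound : ‖b·∇x‖²_{c⁻¹} ≤ K ‖∇x‖²_A
  have hbae : ∀ᵐ z ∂μ, ∀ j, |b z j| ≤ (eLpNorm (fun w => b w j) ⊤ μ).toReal :=
    (MeasureTheory.ae_all_iff).2 fun j => Help.ae_bound_of_memLinf (hb j)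
  have hBle : nsq μ (fun z => (c z)⁻¹) (fun z => bdot b gx z) ≤ K * nsqM μ A gx := by
    have hpt : ∀ᵐ z ∂μ, (c z)⁻¹ * ‖bdot b gx z‖ ^ 2
        ≤ K * ∑ i, ∑ j, A z i j * ((starRingEnd ℂ) (gx z i) * gx z j).re := by
      filter_upwards [hc, hbae] with z hz hbz
      set n2 := ∑ j, ‖gx z j‖ ^ 2 with hn2
      have hn2nn : 0 ≤ n2 := Finset.sum_nonneg fun j _ => sq_nonneg _
      have h1 : ‖bdot b gx z‖ ≤ ∑ j, |b z j| * ‖gx z j‖ := by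
        refine (norm_sum_le _ _).trans ?_
        refine le_of_eq (Finset.sum_congr rfl fun j _ => ?_)
        rw [norm_mul, Complex.norm_real, Real.norm_eq_abs]
      have h2 : (∑ j, |b z j| * ‖gx z j‖) ^ 2
          ≤ (∑ j, |b z j| ^ 2) * n2 :=
        Finset.sum_mul_sq_le_sq_mul_sq _ _ _
      have h3 : ∑ j, |b z j| ^ 2 ≤ BB := by
        rw [hBBdef, bInfSq]
        exact Finset.sum_le_sum fun j _ => pow_le_pow_left₀ (abs_nonneg _) (hbz j) 2
      have h4 : α * n2 ≤ ∑ i, ∑ j, A z i j * ((starRingEnd ℂ) (gx z i) * gx z j).re :=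
        hAco z (gx z)
      have hb2 : ‖bdot b gx z‖ ^ 2 ≤ BB * n2 := by
        have hs : 0 ≤ ∑ j, |b z j| * ‖gx z j‖ :=
          Finset.sum_nonneg fun j _ => mul_nonneg (abs_nonneg _) (norm_nonneg _)
        nlinarith [norm_nonneg (bdot b gx z)]
      have hci : (c z)⁻¹ ≤ c₀⁻¹ := inv_anti₀ hc₀ hz
      have hcinv0 : 0 ≤ (c z)⁻¹ := inv_nonneg.2 (le_trans hc₀.le hz)
      calc (c z)⁻¹ * ‖bdot b gx z‖ ^ 2
          ≤ c₀⁻¹ * (BB * n2) := by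
            refine mul_le_mul hci ?_ (sq_nonneg _) (by positivity)
            exact hb2
        _ = K * (α * n2) := by
            rw [hKdef]; field_simp
        _ ≤ K * _ := mul_le_mul_of_nonneg_left h4 hKnn
    have hnn : ∀ᵐ z ∂μ, 0 ≤ (c z)⁻¹ * ‖bdot b gx z‖ ^ 2 := by
      filter_upwards [hcinv_nn] with z hz; positivity
    calc nsq μ (fun z => (c z)⁻¹) (fun z => bdot b gx z)
        ≤ ∫ z, K * ∑ i, ∑ j, A z i j * ((starRingEnd ℂ) (gx z i) * gx z j).re ∂μ :=
          integral_mono_of_nonneg hnn (hAint.const_mul K) hpt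
      _ = K * nsqM μ A gx := integral_const_mul _ _
  -- triangle-type estimates
  have hBint := hcinv_int _ hbdot2
  have hTint : Integrable (fun z => (c z)⁻¹ * ‖bdot b gx z - dy z‖ ^ 2) μ := by
    have := hcinv_int _ (hbdot2.sub hdy2)
    simpa using this
  have hUint := hcinv_int _ hdy2
  have hUT : nsq μ (fun z => (c z)⁻¹) dy
      ≤ 2 * nsq μ (fun z => (c z)⁻¹) (fun z => bdot b gx z)
        + 2 * nsq μ (fun z => (c z)⁻¹) (fun z => bdot b gx z - dy z) := by
    have hint := (hBint.const_mul 2).add (hTint.const_mul 2)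
    have hle : ∀ᵐ z ∂μ, (c z)⁻¹ * ‖dy z‖ ^ 2
        ≤ 2 * ((c z)⁻¹ * ‖bdot b gx z‖ ^ 2)
          + 2 * ((c z)⁻¹ * ‖bdot b gx z - dy z‖ ^ 2) := by
      filter_upwards [hcinv_nn] with z hz
      have h1 : ‖dy z‖ ≤ ‖bdot b gx z‖ + ‖bdot b gx z - dy z‖ := by
        have := norm_sub_le (bdot b gx z) (bdot b gx z - dy z)
        simpa using this
      have h2 : ‖dy z‖ ^ 2 ≤ 2 * ‖bdot b gx z‖ ^ 2 + 2 * ‖bdot b gx z - dy z‖ ^ 2 := by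
        nlinarith [sq_nonneg (‖bdot b gx z‖ - ‖bdot b gx z - dy z‖), norm_nonneg (dy z),
          norm_nonneg (bdot b gx z), norm_nonneg (bdot b gx z - dy z)]
      calc (c z)⁻¹ * ‖dy z‖ ^ 2
          ≤ (c z)⁻¹ * (2 * ‖bdot b gx z‖ ^ 2 + 2 * ‖bdot b gx z - dy z‖ ^ 2) :=
            mul_le_mul_of_nonneg_left h2 hz
        _ = 2 * ((c z)⁻¹ * ‖bdot b gx z‖ ^ 2)
            + 2 * ((c z)⁻¹ * ‖bdot b gx z - dy z‖ ^ 2) := by ring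
    have hnn : ∀ᵐ z ∂μ, 0 ≤ (c z)⁻¹ * ‖dy z‖ ^ 2 := by
      filter_upwards [hcinv_nn] with z hz; positivity
    calc nsq μ (fun z => (c z)⁻¹) dy
        ≤ ∫ z, (2 * ((c z)⁻¹ * ‖bdot b gx z‖ ^ 2)
            + 2 * ((c z)⁻¹ * ‖bdot b gx z - dy z‖ ^ 2)) ∂μ :=
          integral_mono_of_nonneg hnn hint hle
      _ = 2 * nsq μ (fun z => (c z)⁻¹) (fun z => bdot b gx z)
          + 2 * nsq μ (fun z => (c z)⁻¹) (fun z => bdot b gx z - dy z) := by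
          rw [integral_add (hBint.const_mul 2) (hTint.const_mul 2),
            integral_const_mul, integral_const_mul]
          rfl
  have hTU : nsq μ (fun z => (c z)⁻¹) (fun z => bdot b gx z - dy z)
      ≤ 2 * nsq μ (fun z => (c z)⁻¹) (fun z => bdot b gx z)
        + 2 * nsq μ (fun z => (c z)⁻¹) dy := by
    have hint := (hBint.const_mul 2).add (hUint.const_mul 2)
    have hle : ∀ᵐ z ∂μ, (c z)⁻¹ * ‖bdot b gx z - dy z‖ ^ 2
        ≤ 2 * ((c z)⁻¹ * ‖bdot b gx z‖ ^ 2) + 2 * ((c z)⁻¹ * ‖dy z‖ ^ 2) := by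
      filter_upwards [hcinv_nn] with z hz
      have h1 : ‖bdot b gx z - dy z‖ ≤ ‖bdot b gx z‖ + ‖dy z‖ := norm_sub_le _ _
      have h2 : ‖bdot b gx z - dy z‖ ^ 2 ≤ 2 * ‖bdot b gx z‖ ^ 2 + 2 * ‖dy z‖ ^ 2 := by
        nlinarith [sq_nonneg (‖bdot b gx z‖ - ‖dy z‖), norm_nonneg (bdot b gx z - dy z),
          norm_nonneg (bdot b gx z), norm_nonneg (dy z)]
      calc (c z)⁻¹ * ‖bdot b gx z - dy z‖ ^ 2
          ≤ (c z)⁻¹ * (2 * ‖bdot b gx z‖ ^ 2 + 2 * ‖dy z‖ ^ 2) :=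
            mul_le_mul_of_nonneg_left h2 hz
        _ = 2 * ((c z)⁻¹ * ‖bdot b gx z‖ ^ 2) + 2 * ((c z)⁻¹ * ‖dy z‖ ^ 2) := by ring
    have hnn : ∀ᵐ z ∂μ, 0 ≤ (c z)⁻¹ * ‖bdot b gx z - dy z‖ ^ 2 := by
      filter_upwards [hcinv_nn] with z hz; positivity
    calc nsq μ (fun z => (c z)⁻¹) (fun z => bdot b gx z - dy z)
        ≤ ∫ z, (2 * ((c z)⁻¹ * ‖bdot b gx z‖ ^ 2) + 2 * ((c z)⁻¹ * ‖dy z‖ ^ 2)) ∂μ :=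
          integral_mono_of_nonneg hnn hint hle
      _ = 2 * nsq μ (fun z => (c z)⁻¹) (fun z => bdot b gx z)
          + 2 * nsq μ (fun z => (c z)⁻¹) dy := by
          rw [integral_add (hBint.const_mul 2) (hUint.const_mul 2),
            integral_const_mul, integral_const_mul]
          rfl
  -- final arithmetic
  have h2K : 2 * BB / (α * c₀) = 2 * K := by rw [hKdef]; ring
  set M := max 2 (1 + 2 * BB / (α * c₀)) with hMdef
  have hM2 : (2:ℝ) ≤ M := le_max_left _ _
  have hMK : 1 + 2 * K ≤ M := by
    rw [hMdef, h2K]; exact le_max_right _ _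
  exact Help3.arith hS1 hS2 hS3 hT hU hBle hUT hTU hKnn hM2 hMK
end
end
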